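/- arXiv:1201.0276 — 9 statements merged into one kernel-verified Lean document; each statement's English description precedes it below -/
import Mathlib

section
/- Let A = {−1,1} and let n ≥ 3 be odd and r ≥ 1. If n = 3 assume r ≥ 2. Then s_A(C_n^r) ≥ 2^{r−1}(n−1) + 1; equivalently, there exists a sequence over C_n^r of length 2^{r−1}(n−1) having no A-zero-sum subsequence of length n. -/
/-- A multiset `S` over an additive abelian group `G` has an `A`-zero-sum subsequence
of length `k`, for the weight set `A = {-1, 1}`: there is a sub-multiset of `S` of
cardinality `k` that splits as `t₁ + t₂` with `t₁.sum - t₂.sum = 0` (the elements of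
`t₁` receive the weight `+1` and those of `t₂` the weight `-1`). -/
def HasWZSS {G : Type*} [AddCommGroup G] (S : Multiset G) (k : ℕ) : Prop :=
  ∃ t₁ t₂ : Multiset G, t₁ + t₂ ≤ S ∧ Multiset.card (t₁ + t₂) = k ∧ t₁.sum = t₂.sum

/-- `sA G` is the smallest `ℓ` such that every sequence over `G` of length at least `ℓ`
has an `{-1,1}`-zero-sum subsequence of length `exp G`. -/
noncomputable def sA (G : Type*) [AddCommGroup G] : ℕ :=
  sInf {ℓ : ℕ | ∀ S : Multiset G, ℓ ≤ Multiset.card S →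
    HasWZSS S (AddMonoid.exponent G)}

/-- `etaA G` is the smallest `ℓ` such that every sequence over `G` of length at least `ℓ`
has a nonempty `{-1,1}`-zero-sum subsequence of length at most `exp G`. -/
noncomputable def etaA (G : Type*) [AddCommGroup G] : ℕ :=
  sInf {ℓ : ℕ | ∀ S : Multiset G, ℓ ≤ Multiset.card S →
    ∃ k, 1 ≤ k ∧ k ≤ AddMonoid.exponent G ∧ HasWZSS S k}

/-- `gA G` is the smallest `ℓ` such that every sequence over `G` of length at least `ℓ`
consisting of pairwise distinct elements has an `{-1,1}`-zero-sum subsequence of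
length `exp G`. -/
noncomputable def gA (G : Type*) [AddCommGroup G] : ℕ :=
  sInf {ℓ : ℕ | ∀ S : Multiset G, ℓ ≤ Multiset.card S → S.Nodup →
    HasWZSS S (AddMonoid.exponent G)}


open Multiset

section Aux

lemma multiset_sum_apply' {ι : Type*} {M : ι → Type*} [∀ i, AddCommMonoid (M i)]
    (t : Multiset (∀ i, M i)) (j : ι) : t.sum j = (t.map (fun x => x j)).sum := by
  induction t using Multiset.induction with
  | empty => simp
  | cons a s ih => simp [ih]

variable {n : ℕ}

lemma aux_two_ne (hn : 3 ≤ n) : (1 : ZMod n) ≠ -1 := by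
  intro h
  have h2 : ((2 : ℕ) : ZMod n) = 0 := by
    push_cast
    linear_combination h
  rw [ZMod.natCast_eq_zero_iff] at h2
  exact absurd (Nat.le_of_dvd (by norm_num) h2) (by omega)

lemma aux_card (hn : 3 ≤ n) (hodd : Odd n) {a b : ℕ} (hab : a + b = n)
    (h : (a : ZMod n) = (b : ZMod n)) : a = 0 ∨ b = 0 := by
  have h2 : ((2 * a : ℕ) : ZMod n) = 0 := by
    push_cast
    have : ((a : ZMod n)) + (b : ZMod n) = ((n : ℕ) : ZMod n) := by
      rw [← Nat.cast_add, hab]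
    rw [ZMod.natCast_self] at this
    linear_combination this + h
  rw [ZMod.natCast_eq_zero_iff] at h2
  have hcop : Nat.Coprime n 2 := by
    have h1 : n % 2 = 1 := Nat.odd_iff.1 hodd
    have : ¬ (2 ∣ n) := by omega
    exact (Nat.Prime.coprime_iff_not_dvd Nat.prime_two |>.2 this).symm
  have hdvd := hcop.dvd_of_dvd_mul_left h2
  rcases Nat.eq_zero_or_pos a with h0 | hpos
  · left; exact h0
  · right
    have hna := Nat.le_of_dvd hpos hdvd
    omega

end Aux

section Construction

variable (n m : ℕ)

def vv (b : Fin m → Bool) : Fin (m+1) → ZMod n :=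
  Fin.cons 1 (fun i => if b i then 1 else -1)

def SS : Multiset (Fin (m+1) → ZMod n) :=
  (n - 1) • ((Finset.univ : Finset (Fin m → Bool)).val.map (vv n m))

variable {n m}

lemma vv_inj (hn : 3 ≤ n) : Function.Injective (vv n m) := by
  intro b b' h
  funext i
  have := congrFun h i.succ
  simp only [vv, Fin.cons_succ] at this
  by_cases hb : b i <;> by_cases hb' : b' i <;>
    simp [hb, hb'] at this ⊢
  · exact absurd this (aux_two_ne hn)
  · exact absurd this.symm (aux_two_ne hn)

lemma card_SS (hn : 3 ≤ n) : Multiset.card (SS n m) = 2 ^ m * (n - 1) := by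
  simp [SS, mul_comm]

lemma mem_SS (hn : 3 ≤ n) {x : Fin (m+1) → ZMod n} (hx : x ∈ SS n m) :
    ∃ b, vv n m b = x := by
  rw [SS, Multiset.mem_nsmul] at hx
  · obtain ⟨b, _, hb⟩ := Multiset.mem_map.1 hx.2
    exact ⟨b, hb⟩

lemma mem_SS_zero (hn : 3 ≤ n) {x : Fin (m+1) → ZMod n} (hx : x ∈ SS n m) : x 0 = 1 := by
  obtain ⟨b, rfl⟩ := mem_SS hn hx
  simp [vv]

lemma mem_SS_pm (hn : 3 ≤ n) {x : Fin (m+1) → ZMod n} (hx : x ∈ SS n m) (j : Fin (m+1)) :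
    x j = 1 ∨ x j = -1 := by
  obtain ⟨b, rfl⟩ := mem_SS hn hx
  refine Fin.cases ?_ (fun i => ?_) j
  · simp [vv]
  · simp only [vv, Fin.cons_succ]
    by_cases hb : b i <;> simp [hb]

lemma sum_coord_card {t : Multiset (Fin (m+1) → ZMod n)} {j : Fin (m+1)}
    (h : ∀ x ∈ t, x j = 1) : t.sum j = (Multiset.card t : ZMod n) := by
  rw [multiset_sum_apply']
  have : t.map (fun x => x j) = Multiset.replicate (Multiset.card t) 1 :=
    Multiset.eq_replicate.2 ⟨by simp, by
      intro y hy
      obtain ⟨x, hx, rfl⟩ := Multiset.mem_map.1 hy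
      exact h x hx⟩
  rw [this, Multiset.sum_replicate, nsmul_eq_mul, mul_one]

/-- Key lemma: no sub-multiset of `SS` of size `n` sums to zero. -/
lemma key (hn : 3 ≤ n) (hodd : Odd n) {t : Multiset (Fin (m+1) → ZMod n)}
    (hle : t ≤ SS n m) (hcard : Multiset.card t = n) (hsum : t.sum = 0) : False := by
  have hmem : ∀ x ∈ t, x ∈ SS n m := fun x hx => Multiset.mem_of_le hle hx
  -- dichotomy in each coordinate
  have key_j : ∀ j, (∀ x ∈ t, x j = 1) ∨ (∀ x ∈ t, x j = -1) := by
    intro j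
    set t1 := t.filter (fun x => x j = 1) with ht1
    set t2 := t.filter (fun x => ¬ x j = 1) with ht2
    have ht12 : t1 + t2 = t := Multiset.filter_add_not _ t
    have h1 : ∀ x ∈ t1, x j = 1 := fun x hx => (Multiset.mem_filter.1 hx).2
    have h2 : ∀ x ∈ t2, x j = -1 := by
      intro x hx
      have hm := Multiset.mem_filter.1 hx
      rcases mem_SS_pm hn (hmem x hm.1) j with h | h
      · exact absurd h hm.2
      · exact h
    have hsd : (Multiset.card t1 : ZMod n) = (Multiset.card t2 : ZMod n) := by
      have hj : t.sum j = 0 := by rw [hsum]; rfl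
      rw [← ht12] at hj
      rw [Multiset.sum_add] at hj
      have e1 : t1.sum j + t2.sum j = 0 := hj
      rw [sum_coord_card h1] at e1
      have e2 : t2.sum j = -(Multiset.card t2 : ZMod n) := by
        rw [multiset_sum_apply']
        have : t2.map (fun x => x j) = Multiset.replicate (Multiset.card t2) (-1) :=
          Multiset.eq_replicate.2 ⟨by simp, by
            intro y hy
            obtain ⟨x, hx, rfl⟩ := Multiset.mem_map.1 hy
            exact h2 x hx⟩
        rw [this, Multiset.sum_replicate]
        simp [nsmul_eq_mul]
      rw [e2] at e1
      linear_combination e1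
    have hcc : Multiset.card t1 + Multiset.card t2 = n := by
      rw [← Multiset.card_add, ht12, hcard]
    rcases aux_card hn hodd hcc hsd with h0 | h0
    · right
      intro x hx
      have : x ∈ t2 := by
        rw [← ht12] at hx
        rcases Multiset.mem_add.1 hx with h | h
        · exact absurd (Multiset.card_eq_zero.1 h0 ▸ h) (Multiset.notMem_zero x)
        · exact h
      exact h2 x this
    · left
      intro x hx
      have : x ∈ t1 := by
        rw [← ht12] at hx
        rcases Multiset.mem_add.1 hx with h | h
        · exact h
        · exact absurd (Multiset.card_eq_zero.1 h0 ▸ h) (Multiset.notMem_zero x)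
      exact h1 x this
  -- all elements of t are equal
  obtain ⟨x0, hx0⟩ : ∃ x, x ∈ t := Multiset.card_pos_iff_exists_mem.1 (by omega)
  have hall : ∀ x ∈ t, x = x0 := by
    intro x hx
    funext j
    rcases key_j j with h | h
    · rw [h x hx, h x0 hx0]
    · rw [h x hx, h x0 hx0]
  have hrep : t = Multiset.replicate n x0 := Multiset.eq_replicate.2 ⟨hcard, hall⟩
  have hcnt : Multiset.count x0 t = n := by rw [hrep]; simp
  have hcnt2 : Multiset.count x0 (SS n m) ≤ (n - 1) * 1 := by
    rw [SS, Multiset.count_nsmul]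
    have hnd : (((Finset.univ : Finset (Fin m → Bool)).val.map (vv n m))).Nodup :=
      Multiset.Nodup.map (vv_inj hn) Finset.univ.nodup
    exact Nat.mul_le_mul_left _ ((Multiset.nodup_iff_count_le_one.1 hnd) x0)
  have := Multiset.count_le_of_le x0 hle
  omega

lemma no_wzss (hn : 3 ≤ n) (hodd : Odd n) : ¬ HasWZSS (SS n m) n := by
  rintro ⟨t₁, t₂, hle, hcard, hsum⟩
  have hc1 : ∀ t : Multiset (Fin (m+1) → ZMod n), t ≤ SS n m →
      t.sum 0 = (Multiset.card t : ZMod n) :=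
    fun t ht => sum_coord_card (fun x hx => mem_SS_zero hn (Multiset.mem_of_le ht hx))
  have hle1 : t₁ ≤ SS n m := le_trans (Multiset.le_add_right _ _) hle
  have hle2 : t₂ ≤ SS n m := le_trans (Multiset.le_add_left _ _) hle
  have heq : (Multiset.card t₁ : ZMod n) = (Multiset.card t₂ : ZMod n) := by
    rw [← hc1 t₁ hle1, ← hc1 t₂ hle2, hsum]
  rw [Multiset.card_add] at hcard
  rcases aux_card hn hodd hcard heq with h0 | h0
  · have ht1 : t₁ = 0 := Multiset.card_eq_zero.1 h0
    refine key hn hodd hle2 (by omega) ?_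
    rw [← hsum, ht1, Multiset.sum_zero]
  · have ht2 : t₂ = 0 := Multiset.card_eq_zero.1 h0
    refine key hn hodd hle1 (by omega) ?_
    rw [hsum, ht2, Multiset.sum_zero]

lemma exp_pi (hn : 3 ≤ n) : AddMonoid.exponent (Fin (m+1) → ZMod n) = n := by
  rw [AddMonoid.exponent_pi]
  simp only [ZMod.exponent]
  apply Nat.dvd_antisymm
  · exact Finset.lcm_dvd (fun i _ => dvd_rfl)
  · exact Finset.dvd_lcm (Finset.mem_univ 0)

/-- membership of the pigeonhole bound in the defining set of `sA` -/
lemma upper_mem (hn : 3 ≤ n) (S : Multiset (Fin (m+1) → ZMod n))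
    (hS : (n - 1) * n ^ (m + 1) + 1 ≤ Multiset.card S) : HasWZSS S n := by
  have hnz : NeZero n := ⟨by omega⟩
  obtain ⟨x, hx⟩ : ∃ x, n ≤ S.count x := by
    by_contra h
    push_neg at h
    have hb : ∑ y ∈ S.toFinset, S.count y ≤ S.toFinset.card * (n - 1) := by
      calc ∑ y ∈ S.toFinset, S.count y ≤ ∑ y ∈ S.toFinset, (n-1) :=
            Finset.sum_le_sum (fun y _ => by have := h y; omega)
        _ = S.toFinset.card * (n - 1) := by rw [Finset.sum_const, smul_eq_mul]
    have hcb : S.toFinset.card ≤ n ^ (m + 1) := by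
      have := Finset.card_le_univ S.toFinset
      have hcard : Fintype.card (Fin (m+1) → ZMod n) = n ^ (m+1) := by
        rw [Fintype.card_fun]
        simp [ZMod.card]
      omega
    have := Multiset.toFinset_sum_count_eq S
    nlinarith
  refine ⟨Multiset.replicate n x, 0, ?_, by simp, ?_⟩
  · rw [add_zero, Multiset.le_iff_count]
    intro y
    rw [Multiset.count_replicate]
    split
    · next hyx => subst hyx; exact hx
    · omega
  · rw [Multiset.sum_replicate, Multiset.sum_zero]
    funext j
    simp only [Pi.smul_apply, nsmul_eq_mul, Pi.zero_apply, ZMod.natCast_self, zero_mul]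

end Construction

/-- lower bound of Theorem 1: for odd `n ≥ 3` and `r ≥ 1`
(with `r ≥ 2` when `n = 3`), one has `s_A(C_n^r) ≥ 2^(r-1)(n-1) + 1`;
equivalently, there is a sequence over `C_n^r` of length `2^(r-1)(n-1)` with no
`{-1,1}`-zero-sum subsequence of length `n`. -/
theorem sA_lower_bound (n r : ℕ) (hn : 3 ≤ n) (hodd : Odd n) (hr : 1 ≤ r)
    (h3 : n = 3 → 2 ≤ r) :
    2 ^ (r - 1) * (n - 1) + 1 ≤ sA (Fin r → ZMod n) ∧
    ∃ S : Multiset (Fin r → ZMod n),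
      Multiset.card S = 2 ^ (r - 1) * (n - 1) ∧ ¬ HasWZSS S n := by
  obtain ⟨m, rfl⟩ : ∃ m, r = m + 1 := ⟨r - 1, by omega⟩
  have hr1 : m + 1 - 1 = m := rfl
  rw [hr1]
  have hcS := card_SS (n := n) (m := m) hn
  have hno := no_wzss (n := n) (m := m) hn hodd
  refine ⟨?_, SS n m, hcS, hno⟩
  have hexp := exp_pi (n := n) (m := m) hn
  refine le_csInf ⟨(n - 1) * n ^ (m + 1) + 1, ?_⟩ ?_
  · intro S hS
    rw [hexp]
    exact upper_mem hn S hS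
  · rintro b hb
    by_contra hcon
    push_neg at hcon
    have h' := hb (SS n m) (by omega)
    rw [hexp] at h'
    exact hno h'
end

section
/- Let A = {−1,1} and let n ≥ 3 be odd and r ≥ 1. If n = 3 assume r ≥ 2. Then s_A(C_n^r) ≤ (n^r − 1)(n−1)/2 + 1; that is, every sequence over C_n^r of length at least (n^r − 1)(n−1)/2 + 1 has an A-zero-sum subsequence of length n. -/
section Aux
variable {G : Type*} [AddCommGroup G] [DecidableEq G]

lemma wzss_construct (S : Multiset G) (g : G) (hg0 : g ≠ 0) (hgg : g ≠ -g)
    (p q z p' q' z' : ℕ)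
    (hx : p + p' ≤ S.count g) (hy : q + q' ≤ S.count (-g)) (hz : z + z' ≤ S.count 0)
    (hsum : p • g + q • (-g) = p' • g + q' • (-g)) :
    HasWZSS S (p + q + z + (p' + q' + z')) := by
  have hng0 : -g ≠ 0 := fun h => hg0 (by simpa using h)
  refine ⟨Multiset.replicate p g + Multiset.replicate q (-g) + Multiset.replicate z 0,
    Multiset.replicate p' g + Multiset.replicate q' (-g) + Multiset.replicate z' 0, ?_, ?_, ?_⟩
  · rw [Multiset.le_iff_count]
    intro c
    simp only [Multiset.count_add, Multiset.count_replicate]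
    by_cases h1 : g = c
    · subst h1
      simp only [if_neg (show ¬(-g = g) from fun h => hgg h.symm),
        if_neg (show ¬((0 : G) = g) from fun h => hg0 h.symm), eq_self_iff_true, if_true]
      omega
    by_cases h2 : -g = c
    · subst h2
      simp only [if_neg hgg, if_neg (show ¬((0 : G) = -g) from fun h => hng0 h.symm), eq_self_iff_true, if_true]
      omega
    by_cases h3 : (0 : G) = c
    · rw [← h3]
      simp only [if_neg hg0, if_neg hng0, eq_self_iff_true, if_true]
      omega
    · simp only [if_neg h1, if_neg h2, if_neg h3]
      simp
  · simp only [Multiset.card_add, Multiset.card_replicate]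
  · simp only [Multiset.sum_add, Multiset.sum_replicate, smul_zero, add_zero]
    exact hsum

lemma wzss_zeros (S : Multiset G) (k : ℕ) (hk : k ≤ S.count 0) : HasWZSS S k := by
  refine ⟨Multiset.replicate k 0, 0, ?_, ?_, ?_⟩
  · rw [add_zero]
    exact Multiset.le_count_iff_replicate_le.1 hk
  · simp
  · simp

lemma wzss_case3 (S : Multiset G) (g : G) (hg0 : g ≠ 0) (hgg : g ≠ -g)
    (k z : ℕ) (hba : S.count (-g) ≤ S.count g)
    (h2k : 2 * k ≤ S.count g + S.count (-g)) (hz : z ≤ S.count 0) :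
    HasWZSS S (2 * k + z) := by
  set y := min (S.count (-g)) k with hy
  have hyk : y ≤ k := min_le_right _ _
  have h := wzss_construct S g hg0 hgg (k - y) 0 z k y 0 (by omega) (by omega) (by omega) ?_
  · have he : k - y + 0 + z + (k + y + 0) = 2 * k + z := by omega
    rwa [he] at h
  · rw [zero_smul, add_zero, smul_neg, ← sub_eq_add_neg, eq_sub_iff_add_eq, ← add_nsmul,
      Nat.sub_add_cancel hyk]

end Aux

lemma main_bound (n r : ℕ) (hn : 3 ≤ n) (hodd : Odd n) (hr : 1 ≤ r)
    (h3 : n = 3 → 2 ≤ r) (S : Multiset (Fin r → ZMod n))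
    (hS : (n ^ r - 1) * (n - 1) / 2 + 1 ≤ Multiset.card S) :
    HasWZSS S n := by
  haveI : NeZero n := ⟨by omega⟩
  obtain ⟨w, hw⟩ := hodd
  have hNcard : Fintype.card (Fin r → ZMod n) = n ^ r := by
    simp [ZMod.card]
  have hN5 : 5 ≤ n ^ r := by
    rcases eq_or_ne n 3 with rfl | hne3
    · calc (5:ℕ) ≤ 3 ^ 2 := by norm_num
        _ ≤ 3 ^ r := Nat.pow_le_pow_right (by norm_num) (h3 rfl)
    · calc (5:ℕ) ≤ n := by omega
        _ = n ^ 1 := (pow_one n).symm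
        _ ≤ n ^ r := Nat.pow_le_pow_right (by omega) hr
  have hexp : ∀ g : Fin r → ZMod n, n • g = 0 := by
    intro g
    funext i
    show n • (g i) = 0
    rw [nsmul_eq_mul, ZMod.natCast_self, zero_mul]
  have hneg : ∀ g : Fin r → ZMod n, g ≠ 0 → g ≠ -g := by
    intro g hg0 h
    have h2 : (2 : ℕ) • g = 0 := by
      rw [two_nsmul]
      nth_rewrite 2 [h]
      exact add_neg_cancel g
    have hd2 : addOrderOf g ∣ 2 := addOrderOf_dvd_of_nsmul_eq_zero h2
    have hdn : addOrderOf g ∣ n := addOrderOf_dvd_of_nsmul_eq_zero (hexp g)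
    have hd1 : addOrderOf g = 1 := by
      rcases (Nat.dvd_prime Nat.prime_two).1 hd2 with h1 | h1
      · exact h1
      · exfalso
        rw [h1] at hdn
        omega
    exact hg0 (AddMonoid.addOrderOf_eq_one_iff.1 hd1)
  set t := S.count 0 with ht
  by_cases htn : n ≤ t
  · exact wzss_zeros S n htn
  push_neg at htn
  have hclaim : ∃ g : Fin r → ZMod n, g ≠ 0 ∧
      (if t = 0 then n else (n - t) + (n - t) % 2) ≤ S.count g + S.count (-g) := by
    by_contra hcon
    push_neg at hcon
    set v := if t = 0 then n else (n - t) + (n - t) % 2 with hv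
    have hsum_univ : ∑ g : Fin r → ZMod n, S.count g = Multiset.card S := by
      rw [← Multiset.toFinset_sum_count_eq]
      exact (Finset.sum_subset (Finset.subset_univ _)
        (fun x _ hx => Multiset.count_eq_zero.2 (fun hm => hx (Multiset.mem_toFinset.2 hm)))).symm
    set E := (Finset.univ.erase (0 : Fin r → ZMod n)) with hE
    have hsplit : Multiset.card S = t + ∑ g ∈ E, S.count g := by
      rw [← hsum_univ]
      exact (Finset.add_sum_erase _ _ (Finset.mem_univ (0 : Fin r → ZMod n))).symm
    have hnegsum : ∑ g ∈ E, S.count (-g) = ∑ g ∈ E, S.count g := by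
      refine Finset.sum_equiv (Equiv.neg _) ?_ ?_
      · intro i
        simp [hE, neg_eq_zero]
      · intro i _
        simp
    have hcardE : E.card = n ^ r - 1 := by
      rw [hE, Finset.card_erase_of_mem (Finset.mem_univ _), Finset.card_univ, hNcard]
    have hbound : ∑ g ∈ E, (S.count g + S.count (-g)) ≤ (n ^ r - 1) * (v - 1) := by
      calc ∑ g ∈ E, (S.count g + S.count (-g)) ≤ ∑ _g ∈ E, (v - 1) := by
            refine Finset.sum_le_sum fun g hg => ?_
            have hg0 : g ≠ 0 := (Finset.mem_erase.1 hg).1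
            have := hcon g hg0
            omega
        _ = (n ^ r - 1) * (v - 1) := by rw [Finset.sum_const, hcardE, smul_eq_mul]
    have hkey : 2 * ∑ g ∈ E, S.count g ≤ (n ^ r - 1) * (v - 1) := by
      calc 2 * ∑ g ∈ E, S.count g = ∑ g ∈ E, S.count g + ∑ g ∈ E, S.count (-g) := by
            rw [hnegsum]; ring
        _ = ∑ g ∈ E, (S.count g + S.count (-g)) := (Finset.sum_add_distrib).symm
        _ ≤ _ := hbound
    have hA : (n ^ r - 1) * (n - 1) / 2 * 2 = (n ^ r - 1) * (n - 1) := by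
      apply Nat.div_mul_cancel
      exact Dvd.dvd.mul_left ⟨w, by omega⟩ _
    by_cases ht0 : t = 0
    · have hv' : (n ^ r - 1) * (v - 1) = (n ^ r - 1) * (n - 1) := by
        rw [hv, if_pos ht0]
      omega
    · rcases Nat.even_or_odd t with hte | hto
      · obtain ⟨u, hu⟩ := hte
        have hv' : v = n - t + 1 := by
          rw [hv, if_neg ht0]
          omega
        have hprod : (n ^ r - 1) * (v - 1) + (n ^ r - 1) * (t - 1) = (n ^ r - 1) * (n - 1) := by
          rw [← Nat.mul_add]
          congr 1
          omega
        have hmul : 4 * (t - 1) ≤ (n ^ r - 1) * (t - 1) :=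
          Nat.mul_le_mul_right _ (by omega)
        omega
      · obtain ⟨u, hu⟩ := hto
        have hv' : v = n - t := by
          rw [hv, if_neg ht0]
          omega
        have hprod : (n ^ r - 1) * (v - 1) + (n ^ r - 1) * t = (n ^ r - 1) * (n - 1) := by
          rw [← Nat.mul_add]
          congr 1
          omega
        have hmul : 4 * t ≤ (n ^ r - 1) * t :=
          Nat.mul_le_mul_right _ (by omega)
        omega
  obtain ⟨g, hg0, hfg⟩ := hclaim
  have hgg := hneg g hg0
  by_cases ht0 : t = 0
  · rw [if_pos ht0] at hfg
    set x := min (S.count g) n with hx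
    have hxn : x ≤ n := min_le_right _ _
    have h := wzss_construct S g hg0 hgg x 0 0 0 (n - x) 0 (by omega) (by omega) (by omega) ?_
    · have he : x + 0 + 0 + (0 + (n - x) + 0) = n := by omega
      rwa [he] at h
    · rw [zero_smul, zero_smul, add_zero, zero_add, smul_neg, eq_neg_iff_add_eq_zero,
        ← add_nsmul, Nat.add_sub_cancel' hxn]
      exact hexp g
  · rw [if_neg ht0] at hfg
    set v := (n - t) + (n - t) % 2 with hv
    have hvev : v % 2 = 0 := by omega
    have hvn : v ≤ n := by omega
    have hvt : n ≤ v + t := by omega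
    rcases le_total (S.count (-g)) (S.count g) with hba | hba
    · have h := wzss_case3 S g hg0 hgg (v / 2) (n - v) hba (by omega) (by omega)
      have he : 2 * (v / 2) + (n - v) = n := by omega
      rwa [he] at h
    · have hg0' : -g ≠ 0 := fun h => hg0 (by simpa using h)
      have hgg' : -g ≠ -(-g) := by
        rw [neg_neg]
        exact fun h => hgg h.symm
      have hba' : S.count (- -g) ≤ S.count (-g) := by
        rw [neg_neg]
        exact hba
      have h := wzss_case3 S (-g) hg0' hgg' (v / 2) (n - v) hba'
        (by rw [neg_neg]; omega) (by omega)
      have he : 2 * (v / 2) + (n - v) = n := by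
        omega
      rwa [he] at h

lemma exp_eq (n r : ℕ) (hn : 3 ≤ n) (hr : 1 ≤ r) :
    AddMonoid.exponent (Fin r → ZMod n) = n := by
  haveI : NeZero n := ⟨by omega⟩
  have h1 : AddMonoid.exponent (Fin r → ZMod n) ∣ n := by
    apply AddMonoid.exponent_dvd_of_forall_nsmul_eq_zero
    intro g
    funext i
    show n • (g i) = 0
    rw [nsmul_eq_mul, ZMod.natCast_self, zero_mul]
  have h2 : n ∣ AddMonoid.exponent (Fin r → ZMod n) := by
    have hone := AddMonoid.exponent_nsmul_eq_zero (fun _ : Fin r => (1 : ZMod n))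
    have h0 : ((AddMonoid.exponent (Fin r → ZMod n) : ℕ) : ZMod n) = 0 := by
      have := congrFun hone ⟨0, hr⟩
      simpa [nsmul_eq_mul] using this
    exact (ZMod.natCast_eq_zero_iff _ _).1 h0
  exact Nat.dvd_antisymm h1 h2


/-- upper bound of Theorem 1: for odd `n ≥ 3` and `r ≥ 1`
(with `r ≥ 2` when `n = 3`), one has `s_A(C_n^r) ≤ (n^r - 1)(n-1)/2 + 1`;
that is, every sequence over `C_n^r` of length at least `(n^r - 1)(n-1)/2 + 1`
has a `{-1,1}`-zero-sum subsequence of length `n`. -/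
theorem sA_upper_bound (n r : ℕ) (hn : 3 ≤ n) (hodd : Odd n) (hr : 1 ≤ r)
    (h3 : n = 3 → 2 ≤ r) :
    sA (Fin r → ZMod n) ≤ (n ^ r - 1) * (n - 1) / 2 + 1 ∧
    ∀ S : Multiset (Fin r → ZMod n),
      (n ^ r - 1) * (n - 1) / 2 + 1 ≤ Multiset.card S → HasWZSS S n := by
  refine ⟨?_, fun S hS => main_bound n r hn hodd hr h3 S hS⟩
  apply Nat.sInf_le
  show ∀ S : Multiset (Fin r → ZMod n), _ → _
  intro S hS
  rw [exp_eq n r hn hr]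
  exact main_bound n r hn hodd hr h3 S hS
end

section
/- Let A = {−1,1} and let r ≥ 5 be odd. Then s_A(C_3^r) ≥ 2^r + 2·binom(r−1, (r−5)/2) − 1; equivalently, there exists a sequence over C_3^r of length 2^r + 2·binom(r−1, (r−5)/2) − 2 having no A-zero-sum subsequence of length 3. -/
open Finset

namespace SAaux

/-! ### The construction: a big cap-based multiset over `C_3^r` -/

/-- index set: all nonzero coordinates of `Fin r` -/
def Uu (r : ℕ) : Finset (Fin r) := Finset.univ.filter (fun i => i.val ≠ 0)

/-- "affine" vectors: entry `2` on `A`, `1` elsewhere (in particular `1` at index `0`). -/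
def aff {r : ℕ} (A : Finset (Fin r)) : Fin r → ZMod 3 := fun i => if i ∈ A then 2 else 1

/-- "infinity" vectors: entry `1` on `T`, `0` elsewhere. -/
def inff {r : ℕ} (T : Finset (Fin r)) : Fin r → ZMod 3 := fun i => if i ∈ T then 1 else 0

def famA (r k0 : ℕ) : Finset (Finset (Fin r)) :=
  (Uu r).powerset.filter (fun A => 1 ≤ A.card ∧ A.card ≤ k0)

def famW (r k0 : ℕ) : Finset (Finset (Fin r)) :=
  (Uu r).powerset.filter (fun T => k0 ≤ T.card)

def Fset (r k0 : ℕ) : Finset (Fin r → ZMod 3) :=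
  (famA r k0).image aff ∪ (famW r k0).image inff

def Sbig (r k0 : ℕ) : Multiset (Fin r → ZMod 3) := (Fset r k0).val + (Fset r k0).val

lemma card_Uu (r : ℕ) (hr : 0 < r) : (Uu r).card = r - 1 := by
  have h1 : (Finset.univ.filter (fun i : Fin r => i.val = 0)).card = 1 := by
    rw [Finset.card_eq_one]
    exact ⟨⟨0, hr⟩, by ext i; simp [Fin.ext_iff]⟩
  have h2 := Finset.card_filter_add_card_filter_not
    (s := (Finset.univ : Finset (Fin r))) (p := fun i => i.val = 0)
  simp only [Finset.card_univ, Fintype.card_fin, h1, ne_eq] at h2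
  simp only [Uu, ne_eq]
  omega

lemma aff_injective {r : ℕ} : Function.Injective (aff (r := r)) := by
  intro A B h
  ext i
  have := congrFun h i
  by_cases hA : i ∈ A <;> by_cases hB : i ∈ B <;> simp [aff, hA, hB] at this ⊢ <;>
    exact absurd this (by decide)

lemma inff_injective {r : ℕ} : Function.Injective (inff (r := r)) := by
  intro A B h
  ext i
  have := congrFun h i
  by_cases hA : i ∈ A <;> by_cases hB : i ∈ B <;> simp [inff, hA, hB] at this ⊢ <;>
    exact absurd this (by decide)

lemma aff_zero {r : ℕ} (hr : 0 < r) {A : Finset (Fin r)} (hA : A ⊆ Uu r) :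
    aff A ⟨0, hr⟩ = 1 := by
  have : (⟨0, hr⟩ : Fin r) ∉ A := by intro h; have := hA h; simp [Uu] at this
  simp [aff, this]

lemma inff_zero {r : ℕ} (hr : 0 < r) {T : Finset (Fin r)} (hT : T ⊆ Uu r) :
    inff T ⟨0, hr⟩ = 0 := by
  have : (⟨0, hr⟩ : Fin r) ∉ T := by intro h; have := hT h; simp [Uu] at this
  simp [inff, this]

lemma mem_Fset {r k0 : ℕ} {x : Fin r → ZMod 3} (hx : x ∈ Fset r k0) :
    (∃ A, A ⊆ Uu r ∧ 1 ≤ A.card ∧ A.card ≤ k0 ∧ x = aff A) ∨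
    (∃ T, T ⊆ Uu r ∧ k0 ≤ T.card ∧ x = inff T) := by
  simp only [Fset, famA, famW, Finset.mem_union, Finset.mem_image, Finset.mem_filter,
    Finset.mem_powerset] at hx
  rcases hx with ⟨A, ⟨hsub, h1, h2⟩, rfl⟩ | ⟨T, ⟨hsub, h1⟩, rfl⟩
  · exact Or.inl ⟨A, hsub, h1, h2, rfl⟩
  · exact Or.inr ⟨T, hsub, h1, rfl⟩

/-! ### No short plus-minus zero-sum subsequence -/

lemma aff_triple {r : ℕ} {A B C : Finset (Fin r)}
    (h : aff A + aff B + aff C = 0) : A = B ∧ A = C := by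
  have key : ∀ i, (i ∈ A ↔ i ∈ B) ∧ (i ∈ A ↔ i ∈ C) := by
    intro i
    have hi := congrFun h i
    simp only [Pi.add_apply, Pi.zero_apply, aff] at hi
    by_cases hA : i ∈ A <;> by_cases hB : i ∈ B <;> by_cases hC : i ∈ C <;>
      simp only [hA, hB, hC, if_true, if_false, if_pos, if_neg, not_false_iff] at hi <;>
      simp [hA, hB, hC] <;> exact absurd hi (by decide)
  exact ⟨Finset.ext fun i => (key i).1, Finset.ext fun i => (key i).2⟩

lemma inff_triple {r : ℕ} {A B C : Finset (Fin r)}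
    (h : inff A + inff B + inff C = 0) : A = B ∧ A = C := by
  have key : ∀ i, (i ∈ A ↔ i ∈ B) ∧ (i ∈ A ↔ i ∈ C) := by
    intro i
    have hi := congrFun h i
    simp only [Pi.add_apply, Pi.zero_apply, inff] at hi
    by_cases hA : i ∈ A <;> by_cases hB : i ∈ B <;> by_cases hC : i ∈ C <;>
      simp only [hA, hB, hC, if_true, if_false, if_pos, if_neg, not_false_iff] at hi <;>
      simp [hA, hB, hC] <;> exact absurd hi (by decide)
  exact ⟨Finset.ext fun i => (key i).1, Finset.ext fun i => (key i).2⟩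

lemma aff_inff_aff {r k0 : ℕ} {A T C : Finset (Fin r)}
    (h : aff A + inff T = aff C)
    (hA1 : 1 ≤ A.card) (hT : k0 ≤ T.card) (hC : C.card ≤ k0) : False := by
  have hdisj : Disjoint A T := by
    rw [Finset.disjoint_left]
    intro i hiA hiT
    have hi := congrFun h i
    simp only [Pi.add_apply, aff, inff, hiA, hiT, if_true] at hi
    by_cases hiC : i ∈ C <;> simp [hiC] at hi <;> exact absurd hi (by decide)
  have hCU : C = A ∪ T := by
    ext i
    have hi := congrFun h i
    simp only [Pi.add_apply, aff, inff] at hi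
    by_cases hiA : i ∈ A <;> by_cases hiT : i ∈ T <;> by_cases hiC : i ∈ C <;>
      simp only [hiA, hiT, hiC, if_true, if_false, if_pos, if_neg, not_false_iff] at hi ⊢ <;>
      simp [hiA, hiT, hiC] <;> exact absurd hi (by decide)
  have := Finset.card_union_of_disjoint hdisj
  rw [← hCU] at this
  omega

section
variable {r s : ℕ} (hrs : r = 2 * s + 1) (hs : 2 ≤ s) (hUu : (Uu r).card = 2 * s)

include hUu in
lemma inff_inff {T U V : Finset (Fin r)}
    (h : inff T + inff U = inff V)
    (hT : T ⊆ Uu r) (hU : U ⊆ Uu r)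
    (hTc : s + 1 ≤ T.card) (hUc : s + 1 ≤ U.card) : False := by
  have hdisj : Disjoint T U := by
    rw [Finset.disjoint_left]
    intro i hiT hiU
    have hi := congrFun h i
    simp only [Pi.add_apply, aff, inff, hiT, hiU, if_true] at hi
    by_cases hiV : i ∈ V <;> simp [hiV] at hi <;> exact absurd hi (by decide)
  have hsub : T ∪ U ⊆ Uu r := Finset.union_subset hT hU
  have h1 := Finset.card_union_of_disjoint hdisj
  have h2 := Finset.card_le_card hsub
  omega

include hrs hs in
omit hUu in
lemma triple_eq {a b c : Fin r → ZMod 3}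
    (ha : a ∈ Fset r (s+1)) (hb : b ∈ Fset r (s+1)) (hc : c ∈ Fset r (s+1))
    (h : a + b + c = 0) : a = b ∧ a = c := by
  have hr0 : 0 < r := by omega
  rcases mem_Fset ha with ⟨A, hAs, hA1, hA2, rfl⟩ | ⟨A, hAs, hA1, rfl⟩ <;>
  rcases mem_Fset hb with ⟨B, hBs, hB1, hB2, rfl⟩ | ⟨B, hBs, hB1, rfl⟩ <;>
  rcases mem_Fset hc with ⟨C, hCs, hC1, hC2, rfl⟩ | ⟨C, hCs, hC1, rfl⟩
  · obtain ⟨h1, h2⟩ := aff_triple h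
    exact ⟨by rw [h1], by rw [h2]⟩
  all_goals (try {
    have h0 := congrFun h ⟨0, hr0⟩
    simp only [Pi.add_apply, Pi.zero_apply, aff_zero hr0 hAs, aff_zero hr0 hBs,
      aff_zero hr0 hCs, inff_zero hr0 hAs, inff_zero hr0 hBs, inff_zero hr0 hCs] at h0
    exact absurd h0 (by decide) })
  obtain ⟨h1, h2⟩ := inff_triple h
  exact ⟨by rw [h1], by rw [h2]⟩

include hrs hs hUu in
lemma pair_ne {a b c : Fin r → ZMod 3}
    (ha : a ∈ Fset r (s+1)) (hb : b ∈ Fset r (s+1)) (hc : c ∈ Fset r (s+1)) :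
    a + b ≠ c := by
  intro h
  have hr0 : 0 < r := by omega
  rcases mem_Fset ha with ⟨A, hAs, hA1, hA2, rfl⟩ | ⟨A, hAs, hA1, rfl⟩ <;>
  rcases mem_Fset hb with ⟨B, hBs, hB1, hB2, rfl⟩ | ⟨B, hBs, hB1, rfl⟩ <;>
  rcases mem_Fset hc with ⟨C, hCs, hC1, hC2, rfl⟩ | ⟨C, hCs, hC1, rfl⟩
  · have h0 := congrFun h ⟨0, hr0⟩
    simp only [Pi.add_apply, aff_zero hr0 hAs, aff_zero hr0 hBs, aff_zero hr0 hCs] at h0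
    exact absurd h0 (by decide)
  · have h0 := congrFun h ⟨0, hr0⟩
    simp only [Pi.add_apply, aff_zero hr0 hAs, aff_zero hr0 hBs, inff_zero hr0 hCs] at h0
    exact absurd h0 (by decide)
  · exact aff_inff_aff h hA1 hB1 hC2
  · have h0 := congrFun h ⟨0, hr0⟩
    simp only [Pi.add_apply, aff_zero hr0 hAs, inff_zero hr0 hBs, inff_zero hr0 hCs] at h0
    exact absurd h0 (by decide)
  · rw [add_comm] at h
    exact aff_inff_aff h hB1 hA1 hC2
  · have h0 := congrFun h ⟨0, hr0⟩
    simp only [Pi.add_apply, inff_zero hr0 hAs, aff_zero hr0 hBs, inff_zero hr0 hCs] at h0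
    exact absurd h0 (by decide)
  · have h0 := congrFun h ⟨0, hr0⟩
    simp only [Pi.add_apply, inff_zero hr0 hAs, inff_zero hr0 hBs, aff_zero hr0 hCs] at h0
    exact absurd h0 (by decide)
  · exact inff_inff hUu h hAs hBs hA1 hB1

include hrs hs hUu in
lemma no_bad : ¬ HasWZSS (Sbig r (s+1)) 3 := by
  rintro ⟨t₁, t₂, hle, hcard, hsum⟩
  have hmem : ∀ x ∈ t₁ + t₂, x ∈ Fset r (s+1) := by
    intro x hx
    have hx2 := Multiset.mem_of_le hle hx
    rw [Sbig, Multiset.mem_add] at hx2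
    rcases hx2 with h | h <;> exact h
  have hcnt : ∀ x, Multiset.count x (t₁ + t₂) ≤ 2 := by
    intro x
    have h1 := Multiset.count_le_of_le x hle
    have h2 : Multiset.count x (Sbig r (s+1)) ≤ 2 := by
      rw [Sbig, Multiset.count_add]
      have := Multiset.nodup_iff_count_le_one.mp (Fset r (s+1)).nodup x
      omega
    omega
  rw [Multiset.card_add] at hcard
  have hct : Multiset.card t₁ = 0 ∨ Multiset.card t₁ = 1 ∨ Multiset.card t₁ = 2 ∨
      Multiset.card t₁ = 3 := by omega
  rcases hct with h1 | h1 | h1 | h1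
  · -- t₁ = 0, t₂ = {a,b,c} with a+b+c=0
    have ht1 : t₁ = 0 := Multiset.card_eq_zero.mp h1
    have h2 : Multiset.card t₂ = 3 := by omega
    obtain ⟨a, b, c, rfl⟩ := Multiset.card_eq_three.mp h2
    subst ht1
    have h0 : a + b + c = 0 := by
      have := hsum.symm
      simp only [Multiset.sum_zero, Multiset.insert_eq_cons, Multiset.sum_cons,
        Multiset.sum_singleton] at this
      rw [add_assoc]; exact this
    have ha := hmem a (by simp)
    have hb := hmem b (by simp)
    have hc := hmem c (by simp)
    obtain ⟨hab, hac⟩ := triple_eq hrs hs ha hb hc h0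
    subst hab; subst hac
    have := hcnt a
    simp [Multiset.insert_eq_cons] at this
  · -- t₁ = {a}, t₂ = {b,c} : b + c = a
    obtain ⟨a, rfl⟩ := Multiset.card_eq_one.mp h1
    have h2 : Multiset.card t₂ = 2 := by omega
    obtain ⟨b, c, rfl⟩ := Multiset.card_eq_two.mp h2
    have h0 : b + c = a := by
      have := hsum.symm
      simp only [Multiset.insert_eq_cons, Multiset.sum_cons, Multiset.sum_singleton] at this
      exact this
    exact pair_ne hrs hs hUu (hmem b (by simp)) (hmem c (by simp)) (hmem a (by simp)) h0
  · -- t₁ = {a,b}, t₂ = {c} : a + b = c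
    obtain ⟨a, b, rfl⟩ := Multiset.card_eq_two.mp h1
    have h2 : Multiset.card t₂ = 1 := by omega
    obtain ⟨c, rfl⟩ := Multiset.card_eq_one.mp h2
    have h0 : a + b = c := by
      have := hsum
      simp only [Multiset.insert_eq_cons, Multiset.sum_cons, Multiset.sum_singleton] at this
      exact this
    exact pair_ne hrs hs hUu (hmem a (by simp)) (hmem b (by simp)) (hmem c (by simp)) h0
  · -- t₁ = {a,b,c}, t₂ = 0 : a+b+c = 0
    have h2 : Multiset.card t₂ = 0 := by omega
    have ht2 : t₂ = 0 := Multiset.card_eq_zero.mp h2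
    obtain ⟨a, b, c, rfl⟩ := Multiset.card_eq_three.mp h1
    subst ht2
    have h0 : a + b + c = 0 := by
      have := hsum
      simp only [Multiset.sum_zero, Multiset.insert_eq_cons, Multiset.sum_cons,
        Multiset.sum_singleton] at this
      rw [add_assoc]; exact this
    have ha := hmem a (by simp)
    have hb := hmem b (by simp)
    have hc := hmem c (by simp)
    obtain ⟨hab, hac⟩ := triple_eq hrs hs ha hb hc h0
    subst hab; subst hac
    have := hcnt a
    simp [Multiset.insert_eq_cons] at this

/-! ### Cardinality of the construction -/

include hrs hs hUu in
lemma card_Fset : (Fset r (s+1)).card = 2 ^ (2*s) - 1 + Nat.choose (2*s) (s+1) := by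
  have hr0 : 0 < r := by omega
  have hdisj : Disjoint ((famA r (s+1)).image aff) ((famW r (s+1)).image inff) := by
    rw [Finset.disjoint_left]
    rintro x hx1 hx2
    simp only [Finset.mem_image] at hx1 hx2
    obtain ⟨A, hA, rfl⟩ := hx1
    obtain ⟨T, hT, hEq⟩ := hx2
    have hAs : A ⊆ Uu r := Finset.mem_powerset.mp (Finset.mem_filter.mp hA).1
    have hTs : T ⊆ Uu r := Finset.mem_powerset.mp (Finset.mem_filter.mp hT).1
    have h0 := congrFun hEq ⟨0, hr0⟩
    rw [inff_zero hr0 hTs, aff_zero hr0 hAs] at h0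
    exact absurd h0 (by decide)
  rw [Fset, Finset.card_union_of_disjoint hdisj,
    Finset.card_image_of_injective _ aff_injective,
    Finset.card_image_of_injective _ inff_injective]
  have hsum := Finset.card_union_add_card_inter (famA r (s+1)) (famW r (s+1))
  have hUnion : (famA r (s+1) ∪ famW r (s+1)).card = 2 ^ (2*s) - 1 := by
    have heq : famA r (s+1) ∪ famW r (s+1) = (Uu r).powerset.erase ∅ := by
      ext A
      simp only [famA, famW, Finset.mem_union, Finset.mem_filter, Finset.mem_powerset,
        Finset.mem_erase, ne_eq, ← Finset.nonempty_iff_ne_empty, ← Finset.card_pos]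
      constructor
      · rintro (⟨h1, h2, _⟩ | ⟨h1, h2⟩)
        · exact ⟨by omega, h1⟩
        · exact ⟨by omega, h1⟩
      · rintro ⟨h1, h2⟩
        by_cases hc : A.card ≤ s + 1
        · exact Or.inl ⟨h2, by omega, hc⟩
        · exact Or.inr ⟨h2, by omega⟩
    rw [heq, Finset.card_erase_of_mem (Finset.empty_mem_powerset _), Finset.card_powerset, hUu]
  have hInter : (famA r (s+1) ∩ famW r (s+1)).card = Nat.choose (2*s) (s+1) := by
    have heq : famA r (s+1) ∩ famW r (s+1) = (Uu r).powersetCard (s+1) := by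
      ext A
      simp only [famA, famW, Finset.mem_inter, Finset.mem_filter, Finset.mem_powerset,
        Finset.mem_powersetCard]
      constructor
      · rintro ⟨⟨h1, _, h3⟩, ⟨_, h4⟩⟩
        exact ⟨h1, by omega⟩
      · rintro ⟨h1, h2⟩
        exact ⟨⟨h1, by omega, by omega⟩, ⟨h1, by omega⟩⟩
    rw [heq, Finset.card_powersetCard, hUu]
  omega

end

end SAaux

namespace SAaux2

lemma nsmul3 (r : ℕ) (x : Fin r → ZMod 3) : 3 • x = 0 := by
  funext i
  show (3 : ℕ) • x i = 0
  have h : ((3:ℕ) : ZMod 3) = 0 := by decide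
  rw [nsmul_eq_mul, h, zero_mul]

lemma exp3 (r : ℕ) (hr : 0 < r) : AddMonoid.exponent (Fin r → ZMod 3) = 3 := by
  haveI : Fact (Nat.Prime 3) := ⟨by norm_num⟩
  have hdvd : AddMonoid.exponent (Fin r → ZMod 3) ∣ 3 :=
    AddMonoid.exponent_dvd_of_forall_nsmul_eq_zero (nsmul3 r)
  have hx : (fun _ : Fin r => (1 : ZMod 3)) ≠ 0 := by
    intro h
    have h2 := congrFun h ⟨0, hr⟩
    simp at h2
  have hord : addOrderOf (fun _ : Fin r => (1 : ZMod 3)) = 3 :=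
    addOrderOf_eq_prime (nsmul3 r _) hx
  have h3 := AddMonoid.addOrder_dvd_exponent (fun _ : Fin r => (1 : ZMod 3))
  rw [hord] at h3
  exact Nat.dvd_antisymm hdvd h3

lemma pigeon (r : ℕ) (S : Multiset (Fin r → ZMod 3))
    (hS : 2 * 3 ^ r + 1 ≤ Multiset.card S) : ∃ x, 3 ≤ S.count x := by
  by_contra hc
  push_neg at hc
  have hb : Multiset.card S = ∑ a ∈ S.toFinset, S.count a :=
    (Multiset.toFinset_sum_count_eq S).symm
  have h2 : ∑ a ∈ S.toFinset, S.count a ≤ ∑ _a ∈ S.toFinset, 2 :=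
    Finset.sum_le_sum (fun a _ => by have := hc a; omega)
  have h3 : S.toFinset.card ≤ 3 ^ r := by
    have := Finset.card_le_univ S.toFinset
    simpa [Fintype.card_fun] using this
  simp only [Finset.sum_const, smul_eq_mul] at h2
  omega

lemma hasWZSS_of_count (r : ℕ) (S : Multiset (Fin r → ZMod 3)) {x : Fin r → ZMod 3}
    (h : 3 ≤ S.count x) : HasWZSS S 3 := by
  refine ⟨Multiset.replicate 3 x, 0, ?_, by simp, ?_⟩
  · rw [add_zero, Multiset.le_iff_count]
    intro y
    rw [Multiset.count_replicate]
    split <;> simp_all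
  · rw [Multiset.sum_replicate, Multiset.sum_zero]
    exact nsmul3 r x

lemma exists_sub (α : Type*) (M : Multiset α) (N : ℕ) (h : N ≤ Multiset.card M) :
    ∃ M' ≤ M, Multiset.card M' = N := by
  refine ⟨(M.toList.take N : List α), ?_, ?_⟩
  · calc ((M.toList.take N : List α) : Multiset α) ≤ (M.toList : Multiset α) :=
          Multiset.coe_le.mpr (M.toList.take_sublist N).subperm
      _ = M := Multiset.coe_toList M
  · rw [Multiset.coe_card, List.length_take, Multiset.length_toList]
    omega

end SAaux2

/-- Theorem 2(i): for odd `r ≥ 5`,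
`s_A(C_3^r) ≥ 2^r + 2·C(r-1, (r-5)/2) - 1`; equivalently, there is a sequence over
`C_3^r` of length `2^r + 2·C(r-1, (r-5)/2) - 2` with no `{-1,1}`-zero-sum
subsequence of length `3`. -/
theorem sA_three_lower_odd (r : ℕ) (hr : 5 ≤ r) (hodd : Odd r) :
    2 ^ r + 2 * Nat.choose (r - 1) ((r - 5) / 2) - 1 ≤ sA (Fin r → ZMod 3) ∧
    ∃ S : Multiset (Fin r → ZMod 3),
      Multiset.card S = 2 ^ r + 2 * Nat.choose (r - 1) ((r - 5) / 2) - 2 ∧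
      ¬ HasWZSS S 3 := by
  obtain ⟨s, hrs⟩ : ∃ s, r = 2 * s + 1 := by
    obtain ⟨k, hk⟩ := hodd
    exact ⟨k, by omega⟩
  have hs : 2 ≤ s := by omega
  have hr0 : 0 < r := by omega
  have hUu : (SAaux.Uu r).card = 2 * s := by rw [SAaux.card_Uu r hr0]; omega
  -- the big construction
  have hnobad := SAaux.no_bad hrs hs hUu
  have hcardF := SAaux.card_Fset hrs hs hUu
  have hcardS : Multiset.card (SAaux.Sbig r (s+1)) = 2 * (2 ^ (2*s) - 1 + Nat.choose (2*s) (s+1)) := by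
    rw [SAaux.Sbig, Multiset.card_add]
    have hv : Multiset.card (SAaux.Fset r (s+1)).val = (SAaux.Fset r (s+1)).card := rfl
    rw [hv, hcardF]
    omega
  -- target cardinality
  set N := 2 ^ r + 2 * Nat.choose (r - 1) ((r - 5) / 2) - 2 with hN
  have hbinom : Nat.choose (2*s) (s - 2) ≤ Nat.choose (2*s) (s+1) := by
    have h1 : Nat.choose (2*s) (s+1) = Nat.choose (2*s) (s-1) := by
      have : 2*s - (s+1) = s - 1 := by omega
      rw [← this, Nat.choose_symm (by omega)]
    rw [h1]
    have h2 : s - 2 < (2*s) / 2 := by omega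
    have := Nat.choose_le_succ_of_lt_half_left (r := s - 2) (n := 2*s) h2
    have h3 : s - 2 + 1 = s - 1 := by omega
    rwa [h3] at this
  have hNr : (r - 1) = 2 * s := by omega
  have hNr2 : (r - 5) / 2 = s - 2 := by omega
  have hpow : 2 ^ r = 2 * 2 ^ (2*s) := by
    rw [hrs, pow_succ']
  have hpow1 : 1 ≤ 2 ^ (2*s) := Nat.one_le_two_pow
  have hNle : N ≤ Multiset.card (SAaux.Sbig r (s+1)) := by
    rw [hcardS, hN, hNr, hNr2, hpow]
    omega
  obtain ⟨S, hSle, hScard⟩ := SAaux2.exists_sub _ (SAaux.Sbig r (s+1)) N hNle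
  have hSnobad : ¬ HasWZSS S 3 := by
    rintro ⟨t₁, t₂, h1, h2, h3⟩
    exact hnobad ⟨t₁, t₂, le_trans h1 hSle, h2, h3⟩
  refine ⟨?_, S, hScard, hSnobad⟩
  -- the sInf lower bound
  have hexp : AddMonoid.exponent (Fin r → ZMod 3) = 3 := SAaux2.exp3 r hr0
  have hNsucc : 2 ^ r + 2 * Nat.choose (r - 1) ((r - 5) / 2) - 1 = N + 1 := by
    have : 2 ≤ 2 ^ r := by
      calc 2 = 2^1 := rfl
      _ ≤ 2^r := Nat.pow_le_pow_right (by norm_num) (by omega)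
    omega
  rw [hNsucc, sA]
  apply le_csInf
  · refine ⟨2 * 3 ^ r + 1, fun T hT => ?_⟩
    obtain ⟨x, hx⟩ := SAaux2.pigeon r T hT
    rw [hexp]
    exact SAaux2.hasWZSS_of_count r T hx
  · intro ℓ hℓ
    by_contra hcon
    push_neg at hcon
    have hℓN : ℓ ≤ N := by omega
    have := hℓ S (by omega)
    rw [hexp] at this
    exact hSnobad this
end

section
/- Let A = {−1,1} and let r ≥ 5 with r ≡ 2 (mod 4), and set m = ⌊(3r−4)/4⌋. Then s_A(C_3^r) ≥ 2·Σ binom(r, j) + 2·binom(r, (r−2)/2) + 1, where the sum is over odd j with 1 ≤ j ≤ m. -/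
/-!
Let `X ⊆ C₃ʳ` consist of the `0/1`-vectors `𝟙_A` with `|A|` odd and at most `m`, and of the vectors
`𝟙 + 𝟙_C` with `|C| = (r - 2) / 2`. The sequence listing every element of `X` twice has length
`2|X|`, and a `{-1, 1}`-weighted zero-sum subsequence of length 3 in it would give `x, y, z ∈ X`,
not all equal, with `x + y + z = 0`, or `x, y, z ∈ X` with `x + y = z`. Writing `x, y, z` as
`δ + 𝟙_A`, `δ' + 𝟙_B`, `δ'' + 𝟙_C`, such a relation holds coordinatewise, so it only says which of
the eight Venn regions of `A, B, C` are empty. Comparing the region sizes with `|A|, |B|, |C|` and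
`r` then forces `x = y = z`: in every other case they contradict the oddness of the sets `A`, the
size of the sets `C`, or the bound `4m + 6 ≤ 3r`.
-/

open Finset

section WeightedZeroSum

variable {G : Type*} [AddCommGroup G]

theorem hasWZSS_exponent_of_le_card [Fintype G] [DecidableEq G] {S : Multiset G}
    (hS : AddMonoid.exponent G * Fintype.card G ≤ Multiset.card S) :
    HasWZSS S (AddMonoid.exponent G) := by
  obtain ⟨x, -, hx⟩ : ∃ x ∈ univ, AddMonoid.exponent G ≤ S.count x := by
    refine exists_le_of_sum_le univ_nonempty ?_
    rwa [Multiset.sum_count_eq_card fun _ _ => mem_univ _, sum_const, card_univ, smul_eq_mul,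
      mul_comm]
  refine ⟨Multiset.replicate (AddMonoid.exponent G) x, 0, ?_, by simp, ?_⟩
  · simpa using Multiset.le_count_iff_replicate_le.1 hx
  · simp [AddMonoid.exponent_nsmul_eq_zero]

theorem card_lt_sA [Finite G] {S : Multiset G} (hS : ¬ HasWZSS S (AddMonoid.exponent G)) :
    Multiset.card S < sA G := by
  classical
  have := Fintype.ofFinite G
  by_contra! hle
  have hmem : sA G ∈ {ℓ : ℕ | ∀ S : Multiset G, ℓ ≤ Multiset.card S →
      HasWZSS S (AddMonoid.exponent G)} :=
    Nat.sInf_mem ⟨_, fun _ hT => hasWZSS_exponent_of_le_card hT⟩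
  exact hS (hmem S hle)

theorem HasWZSS.exists_triple {S : Multiset G} (h : HasWZSS S 3) :
    ∃ x y z, {x, y, z} ≤ S ∧ (x + y + z = 0 ∨ x + y = z) := by
  suffices key : ∀ t₁ t₂ : Multiset G, t₁ + t₂ ≤ S →
      Multiset.card t₁ + Multiset.card t₂ = 3 → t₁.sum = t₂.sum → 2 ≤ Multiset.card t₁ →
      ∃ x y z, {x, y, z} ≤ S ∧ (x + y + z = 0 ∨ x + y = z) by
    obtain ⟨t₁, t₂, hle, hcard, hsum⟩ := h
    rw [Multiset.card_add] at hcard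
    by_cases h₁ : 2 ≤ Multiset.card t₁
    · exact key t₁ t₂ hle hcard hsum h₁
    · exact key t₂ t₁ (add_comm t₁ t₂ ▸ hle) (by omega) hsum.symm (by omega)
  intro t₁ t₂ hle hcard hsum h₁
  obtain h₃ | h₂ : Multiset.card t₁ = 3 ∨ Multiset.card t₁ = 2 := by omega
  · obtain ⟨x, y, z, rfl⟩ := Multiset.card_eq_three.1 h₃
    obtain rfl : t₂ = 0 := Multiset.card_eq_zero.1 (by omega)
    exact ⟨x, y, z, by simpa using hle, Or.inl (by simpa [add_assoc] using hsum)⟩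
  · obtain ⟨x, y, rfl⟩ := Multiset.card_eq_two.1 h₂
    obtain ⟨z, rfl⟩ := Multiset.card_eq_one.1 (show Multiset.card t₂ = 1 by omega)
    exact ⟨x, y, z, by simpa using hle, Or.inr (by simpa using hsum)⟩

theorem not_hasWZSS_three_of_cap_of_sumFree [DecidableEq G] {X : Finset G}
    (hcap : ∀ x ∈ X, ∀ y ∈ X, ∀ z ∈ X, x + y + z = 0 → x = y ∧ y = z)
    (hfree : ∀ x ∈ X, ∀ y ∈ X, ∀ z ∈ X, x + y ≠ z) :
    ¬ HasWZSS (X.val + X.val) 3 := by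
  intro h
  obtain ⟨x, y, z, hle, hxyz⟩ := h.exists_triple
  have hmem : ∀ w ∈ ({x, y, z} : Multiset G), w ∈ X := fun w hw => by
    simpa using Multiset.mem_of_le hle hw
  rcases hxyz with hzero | hsum
  · obtain ⟨rfl, rfl⟩ := hcap x (hmem x (by simp)) y (hmem y (by simp)) z (hmem z (by simp)) hzero
    have h₃ := Multiset.count_le_of_le x hle
    have h₁ := Multiset.nodup_iff_count_le_one.1 X.nodup x
    simp only [Multiset.insert_eq_cons, Multiset.count_cons_self, Multiset.count_singleton_self,
      Multiset.count_add] at h₃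
    omega
  · exact hfree x (hmem x (by simp)) y (hmem y (by simp)) z (hmem z (by simp)) hsum

end WeightedZeroSum

theorem AddMonoid.exponent_pi_const {ι M : Type*} [Fintype ι] [Nonempty ι] [AddMonoid M] :
    AddMonoid.exponent (ι → M) = AddMonoid.exponent M := by
  rw [AddMonoid.exponent_pi]
  exact dvd_antisymm (Finset.lcm_dvd fun _ _ => dvd_rfl)
    (Finset.dvd_lcm (mem_univ (Classical.arbitrary ι)))

section Venn

variable {ι : Type*} [Fintype ι] [DecidableEq ι] (A B C : Finset ι)

def vennRegion (i : ι) : Bool × Bool × Bool := (decide (i ∈ A), decide (i ∈ B), decide (i ∈ C))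

def vennCard (p : Bool × Bool × Bool) : ℕ := #{i | vennRegion A B C i = p}

theorem forall_vennRegion_iff (Q : Bool × Bool × Bool → Prop) :
    (∀ i, Q (vennRegion A B C i)) ↔ ∀ p, ¬ Q p → vennCard A B C p = 0 := by
  simp only [vennCard, card_eq_zero, filter_eq_empty_iff, mem_univ, true_implies]
  exact ⟨fun h p hp i hi => hp (hi ▸ h i), fun h i => by_contra fun hi => h _ hi rfl⟩

theorem card_filter_vennRegion (P : Bool × Bool × Bool → Prop) [DecidablePred P] :
    #{i | P (vennRegion A B C i)} = ∑ p with P p, vennCard A B C p := by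
  rw [card_eq_sum_card_fiberwise (f := vennRegion A B C) (t := {p | P p}) fun i hi => by simp_all]
  refine sum_congr rfl fun p hp => ?_
  rw [vennCard, filter_filter]
  exact congrArg card (filter_congr fun i _ => ⟨fun h => h.2, fun h => ⟨h ▸ (mem_filter.1 hp).2, h⟩⟩)

theorem card_eq_vennCard :
    Fintype.card ι = vennCard A B C (true, true, true) + vennCard A B C (true, true, false)
      + vennCard A B C (true, false, true) + vennCard A B C (true, false, false)
      + vennCard A B C (false, true, true) + vennCard A B C (false, true, false)
      + vennCard A B C (false, false, true) + vennCard A B C (false, false, false) ∧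
    #A = vennCard A B C (true, true, true) + vennCard A B C (true, true, false)
      + vennCard A B C (true, false, true) + vennCard A B C (true, false, false) ∧
    #B = vennCard A B C (true, true, true) + vennCard A B C (true, true, false)
      + vennCard A B C (false, true, true) + vennCard A B C (false, true, false) ∧
    #C = vennCard A B C (true, true, true) + vennCard A B C (true, false, true)
      + vennCard A B C (false, true, true) + vennCard A B C (false, false, true) := by
  have h := card_filter_vennRegion A B C
  refine ⟨?_, ?_, ?_, ?_⟩ <;>
    simp only [sum_filter, Fintype.sum_prod_type, Fintype.sum_bool, add_assoc, vennRegion] at h ⊢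
  · simpa using h (fun _ => True)
  · simpa using h (fun p => p.1)
  · simpa using h (fun p => p.2.1)
  · simpa using h (fun p => p.2.2)

end Venn

section ShiftedIndicator

variable {ι : Type*} [DecidableEq ι]

def shiftedIndicator (δ : ZMod 3) (A : Finset ι) : ι → ZMod 3 :=
  fun i => δ + if i ∈ A then 1 else 0

theorem forall_shiftedIndicator_iff [Fintype ι] (R : ZMod 3 → ZMod 3 → ZMod 3 → Prop)
    (δ₁ δ₂ δ₃ : ZMod 3) (A B C : Finset ι) :
    (∀ i, R (shiftedIndicator δ₁ A i) (shiftedIndicator δ₂ B i) (shiftedIndicator δ₃ C i)) ↔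
      ∀ p : Bool × Bool × Bool, ¬ R (δ₁ + if p.1 then 1 else 0) (δ₂ + if p.2.1 then 1 else 0)
        (δ₃ + if p.2.2 then 1 else 0) → vennCard A B C p = 0 := by
  rw [← forall_vennRegion_iff]
  simp [shiftedIndicator, vennRegion]

theorem shiftedIndicator_injective (δ : ZMod 3) :
    Function.Injective (shiftedIndicator (ι := ι) δ) := by
  intro A B h
  ext i
  have := congrFun h i
  by_cases hA : i ∈ A <;> by_cases hB : i ∈ B <;> simp_all [shiftedIndicator]

theorem shiftedIndicator_zero_ne_one [Fintype ι] {A : Finset ι} (hA : #A < Fintype.card ι)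
    (C : Finset ι) : shiftedIndicator 0 A ≠ shiftedIndicator 1 C := by
  obtain ⟨i, -, hi⟩ := exists_mem_notMem_of_card_lt_card (t := univ) hA
  intro h
  have := congrFun h i
  by_cases hC : i ∈ C <;> simp +decide [shiftedIndicator, hi, hC] at this

end ShiftedIndicator

section CapSet

variable (r m : ℕ)

def oddSubsets : Finset (Finset (Fin r)) := {A | Odd #A ∧ #A ≤ m}

def capSet : Finset (Fin r → ZMod 3) :=
  (oddSubsets r m).image (shiftedIndicator 0) ∪
    (powersetCard ((r - 2) / 2) univ).image (shiftedIndicator 1)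

variable {r m}

theorem card_oddSubsets :
    #(oddSubsets r m) = ∑ j ∈ (Icc 1 m).filter (fun j => Odd j), r.choose j := by
  rw [oddSubsets, card_eq_sum_card_fiberwise (f := card) (t := (Icc 1 m).filter (fun j => Odd j))]
  · refine sum_congr rfl fun j hj => ?_
    rw [filter_filter]
    convert card_powersetCard j (univ : Finset (Fin r)) using 2
    · ext A
      simp only [mem_filter, mem_univ, true_and, mem_powersetCard_univ, mem_Icc] at hj ⊢
      exact ⟨fun h => h.2, fun h => ⟨h ▸ ⟨hj.2, hj.1.2⟩, h⟩⟩
    · simp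
  · intro A hA
    simp only [coe_filter, mem_univ, true_and, Set.mem_ofPred_eq, mem_Icc] at hA ⊢
    exact ⟨⟨hA.1.pos, hA.2⟩, hA.1⟩

theorem card_capSet (hm : m < r) :
    #(capSet r m) = ∑ j ∈ (Icc 1 m).filter (fun j => Odd j), r.choose j
      + r.choose ((r - 2) / 2) := by
  rw [capSet, card_union_of_disjoint, card_image_of_injective _ (shiftedIndicator_injective 0),
    card_image_of_injective _ (shiftedIndicator_injective 1), card_oddSubsets, card_powersetCard,
    card_univ, Fintype.card_fin]
  simp only [disjoint_left, mem_image, not_exists, not_and]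
  rintro _ ⟨A, hA, rfl⟩ C -
  refine (shiftedIndicator_zero_ne_one ?_ C).symm
  simp only [oddSubsets, mem_filter, mem_univ, true_and] at hA
  simp only [Fintype.card_fin]
  omega

theorem exists_of_mem_capSet {x : Fin r → ZMod 3} (hx : x ∈ capSet r m) :
    ∃ δ A, x = shiftedIndicator δ A ∧
      (δ = 0 ∧ #A % 2 = 1 ∧ #A ≤ m ∨ δ = 1 ∧ #A = (r - 2) / 2) := by
  simp only [capSet, oddSubsets, mem_union, mem_image, mem_filter, mem_univ, true_and,
    mem_powersetCard_univ, Nat.odd_iff] at hx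
  rcases hx with ⟨A, hA, rfl⟩ | ⟨C, hC, rfl⟩
  · exact ⟨0, A, rfl, Or.inl ⟨rfl, hA⟩⟩
  · exact ⟨1, C, rfl, Or.inr ⟨rfl, hC⟩⟩

theorem capSet_cap (hr : r % 4 = 2) (hm : 4 * m + 6 ≤ 3 * r) :
    ∀ x ∈ capSet r m, ∀ y ∈ capSet r m, ∀ z ∈ capSet r m, x + y + z = 0 → x = y ∧ y = z := by
  intro x hx y hy z hz hsum
  obtain ⟨δ₁, A, rfl, hA⟩ := exists_of_mem_capSet hx
  obtain ⟨δ₂, B, rfl, hB⟩ := exists_of_mem_capSet hy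
  obtain ⟨δ₃, C, rfl, hC⟩ := exists_of_mem_capSet hz
  have hsum' := funext_iff.1 hsum
  simp only [Pi.add_apply, Pi.zero_apply] at hsum'
  rw [forall_shiftedIndicator_iff (fun a b c => a + b + c = 0)] at hsum'
  rw [funext_iff, funext_iff, ← forall_and,
    forall_shiftedIndicator_iff (fun a b c => a = b ∧ b = c)]
  obtain ⟨hcard, hA', hB', hC'⟩ := card_eq_vennCard A B C
  rw [Fintype.card_fin] at hcard
  -- For fixed shifts, the relations say which Venn regions are empty; what remains is a linear
  -- system in the eight region sizes.
  rcases hA with ⟨rfl, hA⟩ | ⟨rfl, hA⟩ <;> rcases hB with ⟨rfl, hB⟩ | ⟨rfl, hB⟩ <;>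
    rcases hC with ⟨rfl, hC⟩ | ⟨rfl, hC⟩ <;>
    simp +decide only [Prod.forall, Bool.forall_bool, true_implies,
      false_implies, and_true, true_and] at hsum' ⊢ <;>
    omega

theorem capSet_sumFree (hr : r % 4 = 2) (hm : 4 * m + 6 ≤ 3 * r) :
    ∀ x ∈ capSet r m, ∀ y ∈ capSet r m, ∀ z ∈ capSet r m, x + y ≠ z := by
  intro x hx y hy z hz hsum
  obtain ⟨δ₁, A, rfl, hA⟩ := exists_of_mem_capSet hx
  obtain ⟨δ₂, B, rfl, hB⟩ := exists_of_mem_capSet hy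
  obtain ⟨δ₃, C, rfl, hC⟩ := exists_of_mem_capSet hz
  have hsum' := funext_iff.1 hsum
  simp only [Pi.add_apply] at hsum'
  rw [forall_shiftedIndicator_iff (fun a b c => a + b = c)] at hsum'
  obtain ⟨hcard, hA', hB', hC'⟩ := card_eq_vennCard A B C
  rw [Fintype.card_fin] at hcard
  rcases hA with ⟨rfl, hA⟩ | ⟨rfl, hA⟩ <;> rcases hB with ⟨rfl, hB⟩ | ⟨rfl, hB⟩ <;>
    rcases hC with ⟨rfl, hC⟩ | ⟨rfl, hC⟩ <;>
    simp +decide only [Prod.forall, Bool.forall_bool, true_implies,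
      false_implies, and_true, true_and] at hsum' <;>
    omega

end CapSet

theorem sA_three_lower_two_mod_four_general (r : ℕ) (hmod : r % 4 = 2) :
    2 * (∑ j ∈ (Finset.Icc 1 ((3 * r - 4) / 4)).filter (fun j => Odd j),
          Nat.choose r j)
      + 2 * Nat.choose r ((r - 2) / 2) + 1 ≤ sA (Fin r → ZMod 3) := by
  set m := (3 * r - 4) / 4
  have hm : 4 * m + 6 ≤ 3 * r := by omega
  have : NeZero r := ⟨by omega⟩
  have hexp : AddMonoid.exponent (Fin r → ZMod 3) = 3 := by
    rw [AddMonoid.exponent_pi_const, ZMod.exponent]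
  have hfree := not_hasWZSS_three_of_cap_of_sumFree (capSet_cap hmod hm) (capSet_sumFree hmod hm)
  calc _ = Multiset.card ((capSet r m).val + (capSet r m).val) + 1 := by
        rw [Multiset.card_add, card_val, card_capSet (by omega)]
        ring
    _ ≤ sA (Fin r → ZMod 3) := card_lt_sA (by rwa [hexp])

/-- Theorem 2(ii)(a): for `r ≥ 5` with `r ≡ 2 (mod 4)` and
`m = ⌊(3r-4)/4⌋`,
`s_A(C_3^r) ≥ 2·Σ_{1 ≤ j ≤ m, j odd} C(r,j) + 2·C(r, (r-2)/2) + 1`. -/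
theorem sA_three_lower_two_mod_four (r : ℕ) (hr : 5 ≤ r) (hmod : r % 4 = 2) :
    2 * (∑ j ∈ (Finset.Icc 1 ((3 * r - 4) / 4)).filter (fun j => Odd j),
          Nat.choose r j)
      + 2 * Nat.choose r ((r - 2) / 2) + 1 ≤ sA (Fin r → ZMod 3) :=
  sA_three_lower_two_mod_four_general r hmod
end

section
/- Let A = {−1,1} and let r ≥ 5 with r ≡ 0 (mod 4), and set m = ⌊(3r−4)/4⌋. Then s_A(C_3^r) ≥ 2·Σ binom(r, j) + binom(r, r/2) + 1, where the sum is over odd j with 1 ≤ j ≤ m. -/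
open Finset

theorem Multiset.exists_lt_count {α : Type*} [Fintype α] [DecidableEq α] {M : Multiset α}
    {k : ℕ} (h : Fintype.card α * k < card M) : ∃ a, k < M.count a := by
  obtain ⟨a, -, ha⟩ := exists_lt_of_sum_lt (s := univ) (f := fun _ => k) (g := M.count) <| by
    rwa [sum_const, card_univ, smul_eq_mul, Multiset.sum_count_eq_card fun a _ => mem_univ a]
  exact ⟨a, ha⟩

theorem AddMonoid.exponent_pi_zmod (ι : Type*) [Fintype ι] [Nonempty ι] (n : ℕ) :
    AddMonoid.exponent (ι → ZMod n) = n := by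
  rw [AddMonoid.exponent_pi]
  simp only [ZMod.exponent]
  exact Nat.dvd_antisymm (Finset.lcm_dvd fun _ _ => dvd_rfl)
    (Finset.dvd_lcm (mem_univ (Classical.arbitrary ι)))

theorem Finset.ite_mem_injective {ι β : Type*} [DecidableEq ι] {a b : β} (hab : a ≠ b) :
    Function.Injective fun (U : Finset ι) (i : ι) => if i ∈ U then a else b := by
  intro U V h
  ext i
  have := congrFun h i
  by_cases hU : i ∈ U <;> by_cases hV : i ∈ V <;> simp_all

theorem Finset.card_filter_card_mem {α : Type*} [Fintype α] (J : Finset ℕ) :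
    #({U | #U ∈ J} : Finset (Finset α)) = ∑ j ∈ J, (Fintype.card α).choose j := by
  rw [card_eq_sum_card_fiberwise (s := {U | #U ∈ J}) (f := card) (t := J)
    fun U hU => (mem_filter.1 hU).2]
  refine sum_congr rfl fun j hj => ?_
  rw [← card_univ, ← card_powersetCard]
  congr 1
  ext U
  simp only [mem_filter, mem_univ, true_and, mem_powersetCard, subset_univ,
    and_iff_right_iff_imp]
  rintro rfl
  exact hj

section WeightedZeroSum

variable {G : Type*} [AddCommGroup G]

theorem le_sA_of_not_hasWZSS [Finite G] {S : Multiset G}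
    (hS : ¬ HasWZSS S (AddMonoid.exponent G)) : Multiset.card S + 1 ≤ sA G := by
  classical
  have := Fintype.ofFinite G
  refine le_csInf ⟨Fintype.card G * AddMonoid.exponent G + 1, fun M hM => ?_⟩ fun ℓ hℓ => ?_
  · obtain ⟨a, ha⟩ := Multiset.exists_lt_count hM
    refine ⟨Multiset.replicate (AddMonoid.exponent G) a, 0, ?_, by simp, ?_⟩
    · simpa using Multiset.le_count_iff_replicate_le.1 ha.le
    · simp [AddMonoid.exponent_nsmul_eq_zero]
  · by_contra! hlt
    exact hS (hℓ S (by omega))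

end WeightedZeroSum

namespace SAThree

variable {ι : Type*} [Fintype ι] {m : ℕ} {x y z : ι → ZMod 3}

def oneInd (a : ZMod 3) : ℕ := if a = 1 then 1 else 0

def numOnes (x : ι → ZMod 3) : ℕ := #{i | x i = 1}

lemma numOnes_eq_sum (x : ι → ZMod 3) : numOnes x = ∑ i, oneInd (x i) := card_filter _ _

lemma numOnes_add_numOnes_of_forall {c : ℕ}
    (h : ∀ i, oneInd (x i) + oneInd (y i) = oneInd (z i) + c) :
    numOnes x + numOnes y = numOnes z + Fintype.card ι * c := by
  rw [numOnes_eq_sum, numOnes_eq_sum, numOnes_eq_sum, ← sum_add_distrib,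
    sum_congr rfl fun i _ => h i, sum_add_distrib, sum_const, card_univ, smul_eq_mul]

structure IsOddIndicator (m : ℕ) (x : ι → ZMod 3) : Prop where
  binary : ∀ i, x i = 0 ∨ x i = 1
  odd : Odd (numOnes x)
  le : numOnes x ≤ m

structure IsBalancedSign (x : ι → ZMod 3) : Prop where
  sign : ∀ i, x i = 1 ∨ x i = -1
  numOnes_eq : numOnes x = Fintype.card ι / 2

lemma IsBalancedSign.neg (hn : 2 ∣ Fintype.card ι) (hx : IsBalancedSign x) :
    IsBalancedSign (-x) := by
  have coord : ∀ a : ZMod 3, (a = 1 ∨ a = -1) → oneInd (-a) + oneInd a = 1 := by decide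
  have hsum : numOnes (-x) + numOnes x = Fintype.card ι := by
    simpa only [numOnes_eq_sum, Pi.neg_apply, ← sum_add_distrib, sum_const, card_univ,
      smul_eq_mul, mul_one] using sum_congr rfl fun i (_ : i ∈ univ) => coord _ (hx.sign i)
  refine ⟨fun i => ?_, ?_⟩
  · rcases hx.sign i with h | h <;> simp [h]
  · have := hx.numOnes_eq
    omega

lemma IsOddIndicator.not_isBalancedSign (hn : 4 ∣ Fintype.card ι) (hx : IsOddIndicator m x) :
    ¬ IsBalancedSign x := by
  intro h
  have := hx.odd
  rw [h.numOnes_eq, Nat.odd_iff] at this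
  omega

lemma IsOddIndicator.eq_of_add_add_eq_zero (hx : IsOddIndicator m x) (hy : IsOddIndicator m y)
    (hz : IsOddIndicator m z) (h : x + y + z = 0) : x = y ∧ y = z := by
  have coord : ∀ a b c : ZMod 3, (a = 0 ∨ a = 1) → (b = 0 ∨ b = 1) → (c = 0 ∨ c = 1) →
      a + b + c = 0 → a = b ∧ b = c := by decide
  have := fun i => coord _ _ _ (hx.binary i) (hy.binary i) (hz.binary i) (congrFun h i)
  exact ⟨funext fun i => (this i).1, funext fun i => (this i).2⟩

lemma IsBalancedSign.eq_of_add_add_eq_zero (hx : IsBalancedSign x) (hy : IsBalancedSign y)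
    (hz : IsBalancedSign z) (h : x + y + z = 0) : x = y ∧ y = z := by
  have coord : ∀ a b c : ZMod 3, (a = 1 ∨ a = -1) → (b = 1 ∨ b = -1) → (c = 1 ∨ c = -1) →
      a + b + c = 0 → a = b ∧ b = c := by decide
  have := fun i => coord _ _ _ (hx.sign i) (hy.sign i) (hz.sign i) (congrFun h i)
  exact ⟨funext fun i => (this i).1, funext fun i => (this i).2⟩

lemma IsOddIndicator.add_add_ne_zero_of_isBalancedSign (hn : 4 ∣ Fintype.card ι)
    (hm : 4 * m < 3 * Fintype.card ι) (hx : IsOddIndicator m x) (hy : IsOddIndicator m y)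
    (hz : IsBalancedSign z) : x + y + z ≠ 0 := by
  have coord : ∀ a b c : ZMod 3, (a = 0 ∨ a = 1) → (b = 0 ∨ b = 1) → (c = 1 ∨ c = -1) →
      a + b + c = 0 → oneInd a + oneInd b = oneInd c + 1 := by decide
  intro h
  have := numOnes_add_numOnes_of_forall fun i =>
    coord _ _ _ (hx.binary i) (hy.binary i) (hz.sign i) (congrFun h i)
  have := hx.le; have := hy.le; have := hz.numOnes_eq
  omega

lemma IsBalancedSign.add_add_ne_zero_of_isOddIndicator (hx : IsBalancedSign x)
    (hy : IsBalancedSign y) (hz : IsOddIndicator m z) : x + y + z ≠ 0 := by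
  have coord : ∀ a b c : ZMod 3, (a = 1 ∨ a = -1) → (b = 1 ∨ b = -1) → (c = 0 ∨ c = 1) →
      a + b + c = 0 → oneInd a + oneInd b = oneInd c + 1 := by decide
  intro h
  have := numOnes_add_numOnes_of_forall fun i =>
    coord _ _ _ (hx.sign i) (hy.sign i) (hz.binary i) (congrFun h i)
  have := hx.numOnes_eq; have := hy.numOnes_eq; have := hz.odd.pos
  omega

lemma IsOddIndicator.add_ne (hx : IsOddIndicator m x) (hy : IsOddIndicator m y)
    (hz : IsOddIndicator m z) : x + y ≠ z := by
  have coord : ∀ a b c : ZMod 3, (a = 0 ∨ a = 1) → (b = 0 ∨ b = 1) → (c = 0 ∨ c = 1) →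
      a + b = c → oneInd a + oneInd b = oneInd c + 0 := by decide
  intro h
  have := numOnes_add_numOnes_of_forall (c := 0) fun i =>
    coord _ _ _ (hx.binary i) (hy.binary i) (hz.binary i) (congrFun h i)
  have := hx.odd; have := hy.odd; have := hz.odd
  rw [Nat.odd_iff] at *
  omega

lemma IsOddIndicator.add_ne_of_isBalancedSign (hn : 4 ∣ Fintype.card ι)
    (hx : IsOddIndicator m x) (hy : IsBalancedSign y) (hz : IsOddIndicator m z) : x + y ≠ z := by
  have coord : ∀ a b c : ZMod 3, (a = 0 ∨ a = 1) → (b = 1 ∨ b = -1) → (c = 0 ∨ c = 1) →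
      a + b = c → oneInd c = oneInd b := by decide
  intro h
  have hzy : numOnes z = numOnes y := by
    simp only [numOnes_eq_sum]
    exact sum_congr rfl fun i _ =>
      coord _ _ _ (hx.binary i) (hy.sign i) (hz.binary i) (congrFun h i)
  have := hz.odd
  rw [hzy, hy.numOnes_eq, Nat.odd_iff] at this
  omega

lemma eq_of_add_add_eq_zero (hn : 4 ∣ Fintype.card ι) (hm : 4 * m < 3 * Fintype.card ι)
    (hx : IsOddIndicator m x ∨ IsBalancedSign x) (hy : IsOddIndicator m y ∨ IsBalancedSign y)
    (hz : IsOddIndicator m z ∨ IsBalancedSign z) (h : x + y + z = 0) : x = y ∧ y = z := by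
  rcases hx with hx | hx <;> rcases hy with hy | hy <;> rcases hz with hz | hz
  · exact hx.eq_of_add_add_eq_zero hy hz h
  · exact absurd h (hx.add_add_ne_zero_of_isBalancedSign hn hm hy hz)
  · exact absurd (by linear_combination h) (hx.add_add_ne_zero_of_isBalancedSign hn hm hz hy)
  · exact absurd (by linear_combination h) (hy.add_add_ne_zero_of_isOddIndicator hz hx)
  · exact absurd (by linear_combination h) (hy.add_add_ne_zero_of_isBalancedSign hn hm hz hx)
  · exact absurd (by linear_combination h) (hx.add_add_ne_zero_of_isOddIndicator hz hy)
  · exact absurd h (hx.add_add_ne_zero_of_isOddIndicator hy hz)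
  · exact hx.eq_of_add_add_eq_zero hy hz h

lemma eq_and_isBalancedSign_of_add_eq (hn : 4 ∣ Fintype.card ι)
    (hm : 4 * m < 3 * Fintype.card ι) (hx : IsOddIndicator m x ∨ IsBalancedSign x)
    (hy : IsOddIndicator m y ∨ IsBalancedSign y) (hz : IsOddIndicator m z ∨ IsBalancedSign z)
    (h : x + y = z) : x = y ∧ IsBalancedSign x := by
  have hn₂ : 2 ∣ Fintype.card ι := dvd_trans (by norm_num) hn
  rcases hz with hz | hz
  · exfalso
    rcases hx with hx | hx <;> rcases hy with hy | hy
    · exact hx.add_ne hy hz h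
    · exact hx.add_ne_of_isBalancedSign hn hy hz h
    · exact hy.add_ne_of_isBalancedSign hn hx hz (by rw [add_comm, h])
    · exact (hx.neg hn₂).add_add_ne_zero_of_isOddIndicator (hy.neg hn₂) hz (by rw [← h]; abel)
  · obtain ⟨hxy, hyz⟩ := eq_of_add_add_eq_zero hn hm hx hy (.inr (hz.neg hn₂))
      (by rw [h, add_neg_cancel])
    rw [hxy, hyz]
    exact ⟨rfl, hz.neg hn₂⟩

section Construction

variable [DecidableEq ι]

def indicatorVec (U : Finset ι) : ι → ZMod 3 := fun i => if i ∈ U then 1 else 0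

def signVec (T : Finset ι) : ι → ZMod 3 := fun i => if i ∈ T then 1 else -1

lemma numOnes_indicatorVec (U : Finset ι) : numOnes (indicatorVec U) = #U := by
  simp [numOnes, indicatorVec]

lemma numOnes_signVec (T : Finset ι) : numOnes (signVec T) = #T := by
  have : (-1 : ZMod 3) ≠ 1 := by decide
  simp [numOnes, signVec, this]

variable (ι) in
def oddIndicators (m : ℕ) : Finset (ι → ZMod 3) :=
  ({U | #U ∈ {j ∈ Icc 1 m | Odd j}} : Finset (Finset ι)).image indicatorVec

variable (ι) in
def balancedSigns : Finset (ι → ZMod 3) :=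
  (powersetCard (Fintype.card ι / 2) univ).image signVec

variable (ι) in
def extremalSeq (m : ℕ) : Multiset (ι → ZMod 3) :=
  2 • (oddIndicators ι m).val + (balancedSigns ι).val

lemma isOddIndicator_of_mem_oddIndicators (hx : x ∈ oddIndicators ι m) :
    IsOddIndicator m x := by
  obtain ⟨U, hU, rfl⟩ := mem_image.1 hx
  simp only [mem_filter, mem_univ, true_and, mem_Icc] at hU
  refine ⟨fun i => ?_, ?_, ?_⟩
  · unfold indicatorVec; split_ifs <;> simp
  · rw [numOnes_indicatorVec]; exact hU.2
  · rw [numOnes_indicatorVec]; exact hU.1.2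

lemma isBalancedSign_of_mem_balancedSigns (hx : x ∈ balancedSigns ι) : IsBalancedSign x := by
  obtain ⟨T, hT, rfl⟩ := mem_image.1 hx
  refine ⟨fun i => ?_, ?_⟩
  · unfold signVec; split_ifs <;> simp
  · rw [numOnes_signVec]; exact (mem_powersetCard.1 hT).2

lemma mem_extremalSeq (hx : x ∈ extremalSeq ι m) : IsOddIndicator m x ∨ IsBalancedSign x := by
  rcases Multiset.mem_add.1 hx with hx | hx
  · exact .inl (isOddIndicator_of_mem_oddIndicators (Multiset.mem_nsmul.1 hx).2)
  · exact .inr (isBalancedSign_of_mem_balancedSigns hx)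

lemma count_extremalSeq (x : ι → ZMod 3) : (extremalSeq ι m).count x =
    2 * (oddIndicators ι m).val.count x + (balancedSigns ι).val.count x := by
  rw [extremalSeq, Multiset.count_add, Multiset.count_nsmul]

lemma count_extremalSeq_le_one (hn : 4 ∣ Fintype.card ι) (hx : IsBalancedSign x) :
    (extremalSeq ι m).count x ≤ 1 := by
  have hodd : (oddIndicators ι m).val.count x = 0 := Multiset.count_eq_zero.2 fun h =>
    (isOddIndicator_of_mem_oddIndicators h).not_isBalancedSign hn hx
  have := Multiset.nodup_iff_count_le_one.1 (balancedSigns ι).nodup x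
  rw [count_extremalSeq]
  omega

lemma count_extremalSeq_le_two (hn : 4 ∣ Fintype.card ι) (x : ι → ZMod 3) :
    (extremalSeq ι m).count x ≤ 2 := by
  by_cases hx : IsBalancedSign x
  · exact (count_extremalSeq_le_one hn hx).trans one_le_two
  have hbal : (balancedSigns ι).val.count x = 0 := Multiset.count_eq_zero.2 fun h =>
    hx (isBalancedSign_of_mem_balancedSigns h)
  have := Multiset.nodup_iff_count_le_one.1 (oddIndicators ι m).nodup x
  rw [count_extremalSeq]
  omega

lemma card_extremalSeq : Multiset.card (extremalSeq ι m) =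
    2 * ∑ j ∈ {j ∈ Icc 1 m | Odd j}, (Fintype.card ι).choose j
      + (Fintype.card ι).choose (Fintype.card ι / 2) := by
  have hind : Function.Injective (indicatorVec (ι := ι)) := ite_mem_injective (by decide)
  have hsign : Function.Injective (signVec (ι := ι)) := ite_mem_injective (by decide)
  simp only [extremalSeq, oddIndicators, balancedSigns, Multiset.card_add, Multiset.card_nsmul,
    card_val, card_image_of_injective _ hind, card_image_of_injective _ hsign,
    card_filter_card_mem, card_powersetCard, card_univ]

theorem not_hasWZSS_extremalSeq_three (hn : 4 ∣ Fintype.card ι)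
    (hm : 4 * m < 3 * Fintype.card ι) : ¬ HasWZSS (extremalSeq ι m) 3 := by
  intro h
  obtain ⟨x, y, z, hle, hsum⟩ := h.exists_triple
  have hmem : ∀ w ∈ ({x, y, z} : Multiset (ι → ZMod 3)), IsOddIndicator m w ∨ IsBalancedSign w :=
    fun w hw => mem_extremalSeq (Multiset.subset_of_le hle hw)
  have hcount := Multiset.count_le_of_le x hle
  rcases hsum with hsum | hsum
  · obtain ⟨rfl, rfl⟩ := eq_of_add_add_eq_zero hn hm (hmem x (by simp)) (hmem y (by simp))
      (hmem z (by simp)) hsum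
    have := count_extremalSeq_le_two (m := m) hn x
    simp only [Multiset.insert_eq_cons, Multiset.count_cons_self, Multiset.nodup_singleton,
      Multiset.mem_singleton, Multiset.count_eq_one_of_mem, Nat.reduceAdd] at hcount
    omega
  · obtain ⟨rfl, hx⟩ := eq_and_isBalancedSign_of_add_eq hn hm (hmem x (by simp))
      (hmem y (by simp)) (hmem z (by simp)) hsum
    have := count_extremalSeq_le_one (m := m) hn hx
    simp only [Multiset.insert_eq_cons, Multiset.count_cons_self, Order.add_one_le_iff] at hcount
    omega

end Construction

end SAThree

/-- Theorem 2(ii)(b): for `r ≥ 5` with `r ≡ 0 (mod 4)` and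
`m = ⌊(3r-4)/4⌋`,
`s_A(C_3^r) ≥ 2·Σ_{1 ≤ j ≤ m, j odd} C(r,j) + C(r, r/2) + 1`. -/
theorem sA_three_lower_zero_mod_four (r : ℕ) (hr : 5 ≤ r) (hmod : r % 4 = 0) :
    2 * (∑ j ∈ (Finset.Icc 1 ((3 * r - 4) / 4)).filter (fun j => Odd j),
          Nat.choose r j)
      + Nat.choose r (r / 2) + 1 ≤ sA (Fin r → ZMod 3) := by
  have : NeZero r := ⟨by omega⟩
  have hn : 4 ∣ Fintype.card (Fin r) := by rw [Fintype.card_fin]; omega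
  have hm : 4 * ((3 * r - 4) / 4) < 3 * Fintype.card (Fin r) := by rw [Fintype.card_fin]; omega
  have hfree : ¬ HasWZSS (SAThree.extremalSeq (Fin r) ((3 * r - 4) / 4))
      (AddMonoid.exponent (Fin r → ZMod 3)) := by
    rw [AddMonoid.exponent_pi_zmod]
    exact SAThree.not_hasWZSS_extremalSeq_three hn hm
  simpa only [SAThree.card_extremalSeq, Fintype.card_fin] using le_sA_of_not_hasWZSS hfree
end

section
/- Let A = {−1,1}. Then s_A(C_3^3) = 9; that is, every sequence over C_3^3 of length at least 9 has an A-zero-sum subsequence of length 3, and there exists a sequence over C_3^3 of length 8 with no A-zero-sum subsequence of length 3. -/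
open Finset

section SignedSums

variable {G : Type*} [AddCommGroup G]

def IsSignedZeroSum (a b c : G) : Prop :=
  ∃ ε₁ ε₂ ε₃ : ℤˣ, ε₁ • a + ε₂ • b + ε₃ • c = 0

theorem isSignedZeroSum_iff {a b c : G} :
    IsSignedZeroSum a b c ↔ ∃ ε₂ ε₃ : ℤˣ, a + ε₂ • b + ε₃ • c = 0 := by
  refine ⟨fun ⟨ε₁, ε₂, ε₃, h⟩ => ⟨ε₁⁻¹ * ε₂, ε₁⁻¹ * ε₃, ?_⟩,
    fun ⟨ε₂, ε₃, h⟩ => ⟨1, ε₂, ε₃, by rwa [one_smul]⟩⟩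
  simpa only [smul_add, smul_zero, mul_smul, inv_smul_smul] using congrArg (ε₁⁻¹ • ·) h

theorem IsSignedZeroSum.units_smul {a b c : G} (h : IsSignedZeroSum a b c) (u v w : ℤˣ) :
    IsSignedZeroSum (u • a) (v • b) (w • c) := by
  obtain ⟨ε₁, ε₂, ε₃, h⟩ := h
  exact ⟨ε₁ * u⁻¹, ε₂ * v⁻¹, ε₃ * w⁻¹, by simpa only [mul_smul, inv_smul_smul] using h⟩

theorem hasWZSS_of_smul_sum_eq_zero {S : Multiset G} (m : Multiset (ℤˣ × G))
    (hle : m.map Prod.snd ≤ S) (hsum : (m.map fun p => p.1 • p.2).sum = 0) :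
    HasWZSS S (Multiset.card m) := by
  classical
  set pos := m.filter (fun p => p.1 = 1)
  set neg := m.filter (fun p => ¬p.1 = 1)
  have hm : pos + neg = m := Multiset.filter_add_not _ m
  refine ⟨pos.map Prod.snd, neg.map Prod.snd, ?_, ?_, ?_⟩
  · rwa [← Multiset.map_add, hm]
  · rw [← Multiset.map_add, hm, Multiset.card_map]
  · have hpos : pos.map (fun p => p.1 • p.2) = pos.map Prod.snd :=
      Multiset.map_congr rfl fun p hp => by rw [(Multiset.mem_filter.1 hp).2, one_smul]
    have hneg : neg.map (fun p => p.1 • p.2) = neg.map (fun p => -p.2) :=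
      Multiset.map_congr rfl fun p hp => by
        rw [(Int.units_eq_one_or _).resolve_left (Multiset.mem_filter.1 hp).2, Units.neg_smul,
          one_smul]
    rw [← hm, Multiset.map_add, Multiset.sum_add, hpos, hneg, Multiset.sum_map_neg] at hsum
    exact add_neg_eq_zero.1 hsum

theorem IsSignedZeroSum.hasWZSS {S : Multiset G} {a b c : G} (hle : {a, b, c} ≤ S)
    (h : IsSignedZeroSum a b c) : HasWZSS S 3 := by
  obtain ⟨ε₁, ε₂, ε₃, h⟩ := h
  refine hasWZSS_of_smul_sum_eq_zero {(ε₁, a), (ε₂, b), (ε₃, c)} (by simpa using hle) ?_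
  simpa [add_assoc] using h

end SignedSums

namespace Multiset

variable {α : Type*} {S : Multiset α}

theorem triple_le_of_two_le_count [DecidableEq α] {x y : α} (hxy : x ≠ y)
    (hx : 2 ≤ S.count x) (hy : y ∈ S) : ({x, x, y} : Multiset α) ≤ S := by
  have h : ({x, x, y} : Multiset α) = y ::ₘ replicate 2 x := by
    simp only [insert_eq_cons, ← singleton_add, replicate_succ, replicate_zero, add_zero]
    abel
  rw [h, cons_le_of_notMem (by simp [hxy.symm])]
  exact ⟨hy, le_count_iff_replicate_le.1 hx⟩

theorem triple_le_of_mem {x y z : α} (hxy : x ≠ y) (hxz : x ≠ z) (hyz : y ≠ z)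
    (hx : x ∈ S) (hy : y ∈ S) (hz : z ∈ S) : ({x, y, z} : Multiset α) ≤ S :=
  (le_iff_subset (by simp [hxy, hxz, hyz])).2 (by simp [cons_subset, hx, hy, hz])

end Multiset

section NoSignedTriple

variable {G : Type*} [AddCommGroup G] [DecidableEq G] {S : Multiset G}

theorem count_le_two_of_not_hasWZSS (h3 : ∀ x : G, 3 • x = 0) (hS : ¬HasWZSS S 3) (x : G) :
    S.count x ≤ 2 := by
  by_contra! h
  exact hS (IsSignedZeroSum.hasWZSS ((Multiset.le_count_iff_replicate_le (n := 3)).1 h)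
    ⟨1, 1, 1, by simpa [succ_nsmul, add_assoc] using h3 x⟩)

theorem count_add_count_neg_le_two_of_not_hasWZSS (h3 : ∀ x : G, 3 • x = 0)
    (hS : ¬HasWZSS S 3) {x : G} (hx : x ≠ -x) : S.count x + S.count (-x) ≤ 2 := by
  have hvanish : ∀ y : G, y ≠ -y → 2 ≤ S.count y → S.count (-y) = 0 := fun y hy h2 =>
    Multiset.count_eq_zero.2 fun hmem =>
      hS (IsSignedZeroSum.hasWZSS (Multiset.triple_le_of_two_le_count hy h2 hmem)
        ⟨1, 1, -1, by simpa [succ_nsmul, add_assoc] using h3 y⟩)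
  have := hvanish x hx
  have : 2 ≤ S.count (-x) → S.count x = 0 := by
    simpa only [neg_neg] using hvanish (-x) (by rwa [neg_neg, ne_comm])
  have := count_le_two_of_not_hasWZSS h3 hS x
  have := count_le_two_of_not_hasWZSS h3 hS (-x)
  omega

theorem count_add_count_neg_le_one_of_not_hasWZSS (hS : ¬HasWZSS S 3) (h0 : (0 : G) ∈ S)
    {x : G} (hx : x ≠ -x) : S.count x + S.count (-x) ≤ 1 := by
  have hx0 : x ≠ 0 := fun h => hx (by simp [h])
  have hle : ∀ y : G, y ≠ 0 → S.count y ≤ 1 := fun y hy => by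
    by_contra! h
    exact hS (IsSignedZeroSum.hasWZSS (Multiset.triple_le_of_two_le_count hy h h0)
      ⟨1, -1, 1, by simp⟩)
  have hnot : ¬(x ∈ S ∧ -x ∈ S) := fun ⟨hxS, hnS⟩ =>
    hS (IsSignedZeroSum.hasWZSS
      (Multiset.triple_le_of_mem hx hx0 (neg_ne_zero.2 hx0) hxS hnS h0) ⟨1, 1, 1, by simp⟩)
  have := hle x hx0
  have := hle (-x) (neg_ne_zero.2 hx0)
  rw [← Multiset.one_le_count_iff_mem, ← Multiset.one_le_count_iff_mem] at hnot
  omega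

end NoSignedTriple

theorem HasWZSS.exists_powersetCard {G : Type*} [AddCommGroup G] {S : Multiset G} {k : ℕ}
    (h : HasWZSS S k) : ∃ t ∈ S.powersetCard k, ∃ u ∈ t.powerset, 2 • u.sum = t.sum := by
  obtain ⟨t₁, t₂, hle, hcard, hsum⟩ := h
  exact ⟨t₁ + t₂, Multiset.mem_powersetCard.2 ⟨hle, hcard⟩, t₁,
    Multiset.mem_powerset.2 (Multiset.le_add_right _ _),
    by rw [Multiset.sum_add, ← hsum, two_nsmul]⟩

theorem sA_eq_of_forall_of_exists {G : Type*} [AddCommGroup G] {n : ℕ}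
    (hup : ∀ S : Multiset G, n ≤ Multiset.card S → HasWZSS S (AddMonoid.exponent G))
    (hlow : ∃ S : Multiset G, Multiset.card S + 1 = n ∧ ¬HasWZSS S (AddMonoid.exponent G)) :
    sA G = n := by
  refine le_antisymm (Nat.sInf_le hup) (le_csInf ⟨n, hup⟩ fun ℓ hℓ => ?_)
  obtain ⟨S, hcard, hS⟩ := hlow
  by_contra! h
  exact hS (hℓ S (by omega))

namespace F3Cubed

local notation "V" => Fin 3 → ZMod 3

theorem exponent_eq_three : AddMonoid.exponent V = 3 := by
  rw [AddMonoid.exponent_pi, ZMod.exponent]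
  rfl

-- The 13 points of the projective plane over `𝔽₃`, each with first nonzero coordinate `1`.
def projPoint : Fin 13 → V :=
  ![![0,0,1], ![0,1,0], ![0,1,1], ![0,1,2], ![1,0,0], ![1,0,1], ![1,0,2], ![1,1,0], ![1,1,1],
    ![1,1,2], ![1,2,0], ![1,2,1], ![1,2,2]]

def signedProjPoint : Option (Fin 13 × ℤˣ) → V
  | none => 0
  | some (i, u) => u • projPoint i

theorem signedProjPoint_bijective : Function.Bijective signedProjPoint := by
  decide +kernel

theorem projPoint_ne_neg (i : Fin 13) : projPoint i ≠ -projPoint i := fun h => by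
  have := signedProjPoint_bijective.injective (a₁ := some (i, 1)) (a₂ := some (i, -1))
    (by simpa [signedProjPoint] using h)
  simp at this

theorem card_eq_count_zero_add_sum (S : Multiset V) :
    Multiset.card S = S.count 0 + ∑ i, (S.count (projPoint i) + S.count (-projPoint i)) := by
  classical
  rw [← Multiset.sum_count_eq_card (s := univ) (fun _ _ => mem_univ _),
    ← Fintype.sum_bijective _ signedProjPoint_bijective _ _ fun _ => rfl, Fintype.sum_option,
    Fintype.sum_prod_type]
  simp [signedProjPoint]

-- No five points of the projective plane over `𝔽₃` form an arc.
set_option synthInstance.maxSize 1000 in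
theorem isSignedZeroSum_among_five_of_lt : ∀ a b : Fin 13, a < b → ∀ c, b < c → ∀ d, c < d →
    ∀ e, d < e →
    IsSignedZeroSum (projPoint a) (projPoint b) (projPoint c) ∨
    IsSignedZeroSum (projPoint a) (projPoint b) (projPoint d) ∨
    IsSignedZeroSum (projPoint a) (projPoint b) (projPoint e) ∨
    IsSignedZeroSum (projPoint a) (projPoint c) (projPoint d) ∨
    IsSignedZeroSum (projPoint a) (projPoint c) (projPoint e) ∨
    IsSignedZeroSum (projPoint a) (projPoint d) (projPoint e) ∨
    IsSignedZeroSum (projPoint b) (projPoint c) (projPoint d) ∨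
    IsSignedZeroSum (projPoint b) (projPoint c) (projPoint e) ∨
    IsSignedZeroSum (projPoint b) (projPoint d) (projPoint e) ∨
    IsSignedZeroSum (projPoint c) (projPoint d) (projPoint e) := by
  simp only [isSignedZeroSum_iff, funext_iff, Pi.add_apply, Pi.smul_apply, Pi.zero_apply]
  decide +kernel

theorem exists_isSignedZeroSum_of_five_le_card {s : Finset (Fin 13)} (hs : 5 ≤ #s) :
    ∃ i ∈ s, ∃ j ∈ s, ∃ k ∈ s, i ≠ j ∧ i ≠ k ∧ j ≠ k ∧
      IsSignedZeroSum (projPoint i) (projPoint j) (projPoint k) := by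
  set f : Fin 5 ↪o Fin 13 := (Fin.castLEOrderEmb hs).trans (s.orderEmbOfFin rfl)
  have hf : ∀ p, f p ∈ s := fun p => s.orderEmbOfFin_mem rfl _
  have hlt : ∀ p q : Fin 5, p < q → f p < f q := fun p q => f.lt_iff_lt.2
  have hne : ∀ p q : Fin 5, p ≠ q → f p ≠ f q := fun p q => f.injective.ne
  have := isSignedZeroSum_among_five_of_lt (f 0) (f 1) (hlt _ _ (by decide))
    (f 2) (hlt _ _ (by decide)) (f 3) (hlt _ _ (by decide)) (f 4) (hlt _ _ (by decide))
  rcases this with h | h | h | h | h | h | h | h | h | h <;>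
    exact ⟨_, hf _, _, hf _, _, hf _, hne _ _ (by decide), hne _ _ (by decide),
      hne _ _ (by decide), h⟩

theorem smul_projPoint_ne {i j : Fin 13} (u v : ℤˣ) (hij : i ≠ j) :
    u • projPoint i ≠ v • projPoint j := fun h =>
  hij (Prod.ext_iff.1 (Option.some_injective _
    (signedProjPoint_bijective.injective (a₁ := some (i, u)) (a₂ := some (j, v)) h))).1

def projSupport (S : Multiset V) : Finset (Fin 13) :=
  {i | S.count (projPoint i) + S.count (-projPoint i) ≠ 0}

theorem exists_smul_mem_of_mem_projSupport {S : Multiset V} {i : Fin 13}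
    (hi : i ∈ projSupport S) : ∃ u : ℤˣ, u • projPoint i ∈ S := by
  rw [projSupport, mem_filter, ← Nat.pos_iff_ne_zero, Nat.add_pos_iff_pos_or_pos,
    Multiset.count_pos, Multiset.count_pos] at hi
  exact hi.2.elim (fun h => ⟨1, by rwa [one_smul]⟩)
    fun h => ⟨-1, by rwa [Units.neg_smul, one_smul]⟩

theorem five_le_card_projSupport {S : Multiset V} (hS : ¬HasWZSS S 3)
    (h9 : 9 ≤ Multiset.card S) : 5 ≤ #(projSupport S) := by
  have h3 (x : V) : 3 • x = 0 := by
    simpa only [exponent_eq_three] using AddMonoid.exponent_nsmul_eq_zero x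
  have hcard : Multiset.card S = S.count 0 +
      ∑ i ∈ projSupport S, (S.count (projPoint i) + S.count (-projPoint i)) := by
    rw [projSupport, Finset.sum_filter_ne_zero]
    exact card_eq_count_zero_add_sum S
  by_cases h0 : (0 : V) ∈ S
  · have hsum := Finset.sum_le_card_nsmul (projSupport S) _ 1 fun i _ =>
      count_add_count_neg_le_one_of_not_hasWZSS hS h0 (projPoint_ne_neg i)
    have := count_le_two_of_not_hasWZSS h3 hS 0
    rw [smul_eq_mul] at hsum
    omega
  · have hsum := Finset.sum_le_card_nsmul (projSupport S) _ 2 fun i _ =>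
      count_add_count_neg_le_two_of_not_hasWZSS h3 hS (projPoint_ne_neg i)
    rw [Multiset.count_eq_zero.2 h0] at hcard
    rw [smul_eq_mul] at hsum
    omega

theorem hasWZSS_of_nine_le_card (S : Multiset V) (h9 : 9 ≤ Multiset.card S) : HasWZSS S 3 := by
  by_contra hS
  obtain ⟨i, hi, j, hj, k, hk, hij, hik, hjk, h⟩ :=
    exists_isSignedZeroSum_of_five_le_card (five_le_card_projSupport hS h9)
  obtain ⟨u, hu⟩ := exists_smul_mem_of_mem_projSupport hi
  obtain ⟨v, hv⟩ := exists_smul_mem_of_mem_projSupport hj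
  obtain ⟨w, hw⟩ := exists_smul_mem_of_mem_projSupport hk
  exact hS ((h.units_smul u v w).hasWZSS <| Multiset.triple_le_of_mem
    (smul_projPoint_ne u v hij) (smul_projPoint_ne u w hik) (smul_projPoint_ne v w hjk) hu hv hw)

def doubledFrame : Multiset V :=
  {![1,0,0], ![1,0,0], ![0,1,0], ![0,1,0], ![0,0,1], ![0,0,1], ![1,1,1], ![1,1,1]}

theorem not_hasWZSS_doubledFrame : ¬HasWZSS doubledFrame 3 := fun h => by
  obtain ⟨t, ht, u, hu, hsum⟩ := h.exists_powersetCard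
  have : ∀ t ∈ doubledFrame.powersetCard 3, ∀ u ∈ t.powerset, 2 • u.sum ≠ t.sum := by
    decide +kernel
  exact this t ht u hu hsum

end F3Cubed

/-- `s_A(C_3^3) = 9`; that is, every sequence over `C_3^3` of length
at least `9` has a `{-1,1}`-zero-sum subsequence of length `3`, and there is a sequence
of length `8` with no such subsequence. -/
theorem sA_three_cubed :
    sA (Fin 3 → ZMod 3) = 9 ∧
    (∀ S : Multiset (Fin 3 → ZMod 3), 9 ≤ Multiset.card S → HasWZSS S 3) ∧
    ∃ S : Multiset (Fin 3 → ZMod 3), Multiset.card S = 8 ∧ ¬ HasWZSS S 3 := by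
  open F3Cubed in
  refine ⟨sA_eq_of_forall_of_exists ?_ ⟨doubledFrame, rfl, ?_⟩, hasWZSS_of_nine_le_card,
    doubledFrame, rfl, not_hasWZSS_doubledFrame⟩ <;> rw [exponent_eq_three]
  exacts [hasWZSS_of_nine_le_card, not_hasWZSS_doubledFrame]
end

section
/- Let A = {−1,1}. For every integer r ≥ 1, g_A(C_3^r) = 2·η_A(C_3^r) − 1. -/
set_option linter.unusedSectionVars false

namespace WZSSAux

variable {G : Type*} [AddCommGroup G]

theorem mono {S S' : Multiset G} {k : ℕ} (h : S ≤ S') (hw : HasWZSS S k) :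
    HasWZSS S' k := by
  obtain ⟨t₁, t₂, hle, hc, hs⟩ := hw
  exact ⟨t₁, t₂, hle.trans h, hc, hs⟩

theorem of_two_le_count [DecidableEq G] {S : Multiset G} {x : G} (h : 2 ≤ S.count x) :
    HasWZSS S 2 := by
  refine ⟨{x}, {x}, ?_, by simp, rfl⟩
  rw [Multiset.le_iff_count]
  intro a
  by_cases hax : a = x
  · subst hax
    rw [Multiset.count_add, Multiset.count_singleton_self]
    omega
  · have : a ∉ ({x} + {x} : Multiset G) := by
      simp only [Multiset.mem_add, Multiset.mem_singleton]
      tauto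
    rw [Multiset.count_eq_zero_of_notMem this]
    exact Nat.zero_le _

theorem of_zero_mem {S : Multiset G} (h : (0 : G) ∈ S) : HasWZSS S 1 :=
  ⟨{0}, 0, by simpa using h, by simp, by simp⟩

theorem one_iff {S : Multiset G} : HasWZSS S 1 ↔ (0 : G) ∈ S := by
  constructor
  · rintro ⟨t₁, t₂, hle, hc, hs⟩
    have hc' := hc
    rw [Multiset.card_add] at hc'
    rcases Nat.le_one_iff_eq_zero_or_eq_one.mp (by omega : Multiset.card t₁ ≤ 1) with h1 | h1
    · obtain rfl : t₁ = 0 := Multiset.card_eq_zero.mp h1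
      obtain ⟨a, rfl⟩ := Multiset.card_eq_one.mp (by omega : Multiset.card t₂ = 1)
      have ha : a ∈ S := Multiset.subset_of_le hle (by simp)
      have : a = 0 := by simpa using hs.symm
      exact this ▸ ha
    · obtain ⟨a, rfl⟩ := Multiset.card_eq_one.mp h1
      obtain rfl : t₂ = 0 := Multiset.card_eq_zero.mp (by omega)
      have ha : a ∈ S := Multiset.subset_of_le hle (by simp)
      have : a = 0 := by simpa using hs
      exact this ▸ ha
  · exact of_zero_mem

theorem pair_le {S : Multiset G} {a b : G} (ha : a ∈ S) (hb : b ∈ S) (hab : a ≠ b) :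
    ({a, b} : Multiset G) ≤ S := by
  rcases Multiset.exists_cons_of_mem ha with ⟨S', rfl⟩
  have hb' : b ∈ S' := by
    rcases Multiset.mem_cons.mp hb with h | h
    · exact absurd h.symm hab
    · exact h
  exact Multiset.cons_le_cons a (Multiset.singleton_le.mpr hb')

theorem triple_le {S : Multiset G} {a b c : G} (ha : a ∈ S) (hb : b ∈ S) (hc : c ∈ S)
    (hab : a ≠ b) (hac : a ≠ c) (hbc : b ≠ c) :
    ({a, b, c} : Multiset G) ≤ S := by
  rcases Multiset.exists_cons_of_mem ha with ⟨S', rfl⟩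
  have hb' : b ∈ S' := by
    rcases Multiset.mem_cons.mp hb with h | h
    · exact absurd h.symm hab
    · exact h
  have hc' : c ∈ S' := by
    rcases Multiset.mem_cons.mp hc with h | h
    · exact absurd h.symm hac
    · exact h
  exact Multiset.cons_le_cons a (pair_le hb' hc' hbc)

theorem two_elim {S : Multiset G} (h : HasWZSS S 2) :
    ∃ a b, ({a, b} : Multiset G) ≤ S ∧ (b = a ∨ b = -a) := by
  obtain ⟨t₁, t₂, hle, hc, hs⟩ := h
  have hc' := hc
  rw [Multiset.card_add] at hc'
  have h2 : Multiset.card t₁ ≤ 2 := by omega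
  interval_cases h1 : Multiset.card t₁
  · obtain rfl : t₁ = 0 := Multiset.card_eq_zero.mp h1
    obtain ⟨a, b, rfl⟩ := Multiset.card_eq_two.mp (by omega : Multiset.card t₂ = 2)
    refine ⟨a, b, by simpa using hle, Or.inr ?_⟩
    simp only [Multiset.sum_zero, Multiset.insert_eq_cons, Multiset.sum_cons,
      Multiset.sum_singleton] at hs
    rw [eq_neg_iff_add_eq_zero, add_comm]; exact hs.symm
  · obtain ⟨a, rfl⟩ := Multiset.card_eq_one.mp h1
    obtain ⟨b, rfl⟩ := Multiset.card_eq_one.mp (by omega : Multiset.card t₂ = 1)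
    refine ⟨a, b, by simpa using hle, Or.inl ?_⟩
    simpa using hs.symm
  · obtain ⟨a, b, rfl⟩ := Multiset.card_eq_two.mp h1
    obtain rfl : t₂ = 0 := Multiset.card_eq_zero.mp (by omega)
    refine ⟨a, b, by simpa [add_comm] using hle, Or.inr ?_⟩
    simp only [Multiset.sum_zero, Multiset.insert_eq_cons, Multiset.sum_cons,
      Multiset.sum_singleton] at hs
    rw [eq_neg_iff_add_eq_zero, add_comm]; exact hs

theorem of_pair {S : Multiset G} {a : G} (h : ({a, -a} : Multiset G) ≤ S) :
    HasWZSS S 2 :=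
  ⟨{a, -a}, 0, by simpa using h, by simp, by simp⟩

theorem perm_acb (a b c : G) : ({a, c, b} : Multiset G) = {a, b, c} := by
  show a ::ₘ c ::ₘ b ::ₘ 0 = a ::ₘ b ::ₘ c ::ₘ 0
  rw [Multiset.cons_swap c b]

theorem perm_bca (a b c : G) : ({b, c, a} : Multiset G) = {a, b, c} := by
  show b ::ₘ c ::ₘ a ::ₘ 0 = a ::ₘ b ::ₘ c ::ₘ 0
  rw [Multiset.cons_swap c a, Multiset.cons_swap b a]

theorem perm_bac (a b c : G) : ({b, a, c} : Multiset G) = {a, b, c} := by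
  show b ::ₘ a ::ₘ c ::ₘ 0 = a ::ₘ b ::ₘ c ::ₘ 0
  rw [Multiset.cons_swap b a]

theorem perm_cab (a b c : G) : ({c, a, b} : Multiset G) = {a, b, c} := by
  show c ::ₘ a ::ₘ b ::ₘ 0 = a ::ₘ b ::ₘ c ::ₘ 0
  rw [Multiset.cons_swap c a, Multiset.cons_swap c b]

theorem three_elim {S : Multiset G} (h : HasWZSS S 3) :
    ∃ a b c a' b' c' : G, ({a, b, c} : Multiset G) ≤ S ∧
      (a' = a ∨ a' = -a) ∧ (b' = b ∨ b' = -b) ∧ (c' = c ∨ c' = -c) ∧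
      a' + b' + c' = 0 := by
  obtain ⟨t₁, t₂, hle, hc, hs⟩ := h
  have hc' := hc
  rw [Multiset.card_add] at hc'
  have h3 : Multiset.card t₁ ≤ 3 := by omega
  interval_cases h1 : Multiset.card t₁
  · obtain rfl : t₁ = 0 := Multiset.card_eq_zero.mp h1
    obtain ⟨a, b, c, rfl⟩ := Multiset.card_eq_three.mp (by omega : Multiset.card t₂ = 3)
    refine ⟨a, b, c, a, b, c, by simpa using hle, Or.inl rfl, Or.inl rfl, Or.inl rfl, ?_⟩
    simp only [Multiset.sum_zero, Multiset.insert_eq_cons, Multiset.sum_cons,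
      Multiset.sum_singleton] at hs
    rw [← add_assoc] at hs
    exact hs.symm
  · obtain ⟨a, rfl⟩ := Multiset.card_eq_one.mp h1
    obtain ⟨b, c, rfl⟩ := Multiset.card_eq_two.mp (by omega : Multiset.card t₂ = 2)
    refine ⟨a, b, c, a, -b, -c, hle, Or.inl rfl, Or.inr rfl, Or.inr rfl, ?_⟩
    simp only [Multiset.insert_eq_cons, Multiset.sum_cons, Multiset.sum_singleton] at hs
    have h0 : a - (b + c) = 0 := sub_eq_zero.mpr hs
    rw [← h0]; abel
  · obtain ⟨a, b, rfl⟩ := Multiset.card_eq_two.mp h1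
    obtain ⟨c, rfl⟩ := Multiset.card_eq_one.mp (by omega : Multiset.card t₂ = 1)
    refine ⟨a, b, c, a, b, -c, hle, Or.inl rfl, Or.inl rfl, Or.inr rfl, ?_⟩
    simp only [Multiset.insert_eq_cons, Multiset.sum_cons, Multiset.sum_singleton] at hs
    have h0 : a + b - c = 0 := sub_eq_zero.mpr hs
    rw [← h0]; abel
  · obtain ⟨a, b, c, rfl⟩ := Multiset.card_eq_three.mp h1
    obtain rfl : t₂ = 0 := Multiset.card_eq_zero.mp (by omega)
    refine ⟨a, b, c, a, b, c, by simpa using hle, Or.inl rfl, Or.inl rfl, Or.inl rfl, ?_⟩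
    simp only [Multiset.sum_zero, Multiset.insert_eq_cons, Multiset.sum_cons,
      Multiset.sum_singleton] at hs
    rw [← add_assoc] at hs
    exact hs

theorem of_signed {S : Multiset G} {a b c a' b' c' : G}
    (hle : ({a, b, c} : Multiset G) ≤ S)
    (ha : a' = a ∨ a' = -a) (hb : b' = b ∨ b' = -b) (hc : c' = c ∨ c' = -c)
    (h0 : a' + b' + c' = 0) : HasWZSS S 3 := by
  rcases ha with ha | ha <;> rcases hb with hb | hb <;> rcases hc with hc | hc <;>
    rw [ha, hb, hc] at h0
  · refine ⟨{a, b, c}, 0, by simpa using hle, by simp, ?_⟩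
    simp only [Multiset.sum_zero, Multiset.insert_eq_cons, Multiset.sum_cons,
      Multiset.sum_singleton]
    rw [← add_assoc]; exact h0
  · refine ⟨{a, b}, {c}, hle, by simp, ?_⟩
    simp only [Multiset.insert_eq_cons, Multiset.sum_cons, Multiset.sum_singleton]
    rw [← sub_eq_zero, ← h0]; abel
  · refine ⟨{a, c}, {b}, ?_, by simp, ?_⟩
    · show ({a, c, b} : Multiset G) ≤ S
      rw [perm_acb]; exact hle
    · simp only [Multiset.insert_eq_cons, Multiset.sum_cons, Multiset.sum_singleton]
      rw [← sub_eq_zero, ← h0]; abel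
  · refine ⟨{a}, {b, c}, hle, by simp, ?_⟩
    simp only [Multiset.insert_eq_cons, Multiset.sum_cons, Multiset.sum_singleton]
    rw [← sub_eq_zero, ← h0]; abel
  · refine ⟨{b, c}, {a}, ?_, by simp, ?_⟩
    · show ({b, c, a} : Multiset G) ≤ S
      rw [perm_bca]; exact hle
    · simp only [Multiset.insert_eq_cons, Multiset.sum_cons, Multiset.sum_singleton]
      rw [← sub_eq_zero, ← h0]; abel
  · refine ⟨{b}, {a, c}, ?_, by simp, ?_⟩
    · show ({b, a, c} : Multiset G) ≤ S
      rw [perm_bac]; exact hle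
    · simp only [Multiset.insert_eq_cons, Multiset.sum_cons, Multiset.sum_singleton]
      rw [← sub_eq_zero, ← h0]; abel
  · refine ⟨{c}, {a, b}, ?_, by simp, ?_⟩
    · show ({c, a, b} : Multiset G) ≤ S
      rw [perm_cab]; exact hle
    · simp only [Multiset.insert_eq_cons, Multiset.sum_cons, Multiset.sum_singleton]
      rw [← sub_eq_zero, ← h0]; abel
  · refine ⟨0, {a, b, c}, by simpa using hle, by simp, ?_⟩
    simp only [Multiset.sum_zero, Multiset.insert_eq_cons, Multiset.sum_cons,
      Multiset.sum_singleton]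
    have h1 : a + (b + c) = 0 := by rw [← neg_eq_zero, ← h0]; abel
    exact h1.symm

theorem trim {α : Type*} (m : ℕ) (S : Multiset α) (h : m ≤ Multiset.card S) :
    ∃ T, T ≤ S ∧ Multiset.card T = m := by
  refine ⟨(S.toList.take m : List α), ?_, ?_⟩
  · have : ((S.toList.take m : List α) : Multiset α) ≤ (S.toList : Multiset α) :=
      (List.take_sublist m S.toList).subperm
    rwa [Multiset.coe_toList] at this
  · simp only [Multiset.coe_card, List.length_take, Multiset.length_toList]
    omega

theorem select [DecidableEq G] (h3 : ∀ y : G, y + y + y = 0) :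
    ∀ (n : ℕ) (S : Multiset G), S.Nodup → (0 : G) ∉ S → Multiset.card S = n →
    ∃ S', S' ≤ S ∧ S'.Nodup ∧ (∀ x ∈ S', -x ∉ S') ∧
      Multiset.card S ≤ 2 * Multiset.card S' := by
  intro n
  induction n using Nat.strong_induction_on with
  | _ n ih =>
    intro S hnodup h0 hcard
    by_cases hbad : ∃ x ∈ S, -x ∈ S
    · obtain ⟨x, hx, hnx⟩ := hbad
      have hxne : x ≠ -x := by
        intro h
        apply h0
        have hx2 : x + x = 0 := add_eq_zero_iff_eq_neg.mpr h
        have := h3 x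
        rw [hx2, zero_add] at this
        exact this ▸ hx
      have hnxe : -x ∈ S.erase x := by
        rw [Multiset.mem_erase_of_ne (Ne.symm hxne)]
        exact hnx
      set S₂ := (S.erase x).erase (-x) with hS₂
      have hS₂le : S₂ ≤ S := le_trans (Multiset.erase_le _ _) (Multiset.erase_le _ _)
      have hxS : x ∈ S := hx
      have hcard2 : Multiset.card S₂ = n - 2 := by
        rw [hS₂, Multiset.card_erase_of_mem hnxe, Multiset.card_erase_of_mem hx, hcard]
        simp only [Nat.pred_eq_sub_one]
        omega
      have hn2 : 2 ≤ n := by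
        have : (0 : ℕ) < Multiset.card S₂ + 1 := Nat.succ_pos _
        have h1 : Multiset.card (S.erase x) = n - 1 := by
          rw [Multiset.card_erase_of_mem hx, hcard]
          simp only [Nat.pred_eq_sub_one]
        have : 1 ≤ Multiset.card (S.erase x) := Multiset.card_pos_iff_exists_mem.mpr ⟨-x, hnxe⟩
        omega
      have hS₂nodup : S₂.Nodup := Multiset.nodup_of_le hS₂le hnodup
      have hS₂0 : (0 : G) ∉ S₂ := fun h => h0 (Multiset.mem_of_le hS₂le h)
      obtain ⟨S'', hle'', hnodup'', hprop'', hcount''⟩ :=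
        ih (n - 2) (by omega) S₂ hS₂nodup hS₂0 hcard2
      have hxnotmem : x ∉ S₂ := by
        intro h
        exact hnodup.notMem_erase (Multiset.mem_of_le (Multiset.erase_le _ _) h)
      have hnxnotmem : -x ∉ S₂ := (Multiset.nodup_of_le (Multiset.erase_le _ _)
        hnodup).notMem_erase
      refine ⟨x ::ₘ S'', ?_, ?_, ?_, ?_⟩
      · calc x ::ₘ S'' ≤ x ::ₘ S.erase x :=
              Multiset.cons_le_cons x (le_trans hle'' (Multiset.erase_le _ _))
          _ = S := Multiset.cons_erase hx
      · rw [Multiset.nodup_cons]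
        exact ⟨fun h => hxnotmem (Multiset.mem_of_le hle'' h), hnodup''⟩
      · intro y hy
        rcases Multiset.mem_cons.mp hy with rfl | hy'
        · intro h
          rcases Multiset.mem_cons.mp h with h' | h'
          · exact hxne h'.symm
          · exact hnxnotmem (Multiset.mem_of_le hle'' h')
        · intro h
          rcases Multiset.mem_cons.mp h with h' | h'
          · apply hnxnotmem
            have : y = -x := by rw [← neg_neg y, ← h']
            exact Multiset.mem_of_le hle'' (this ▸ hy')
          · exact hprop'' y hy' h'
      · rw [Multiset.card_cons]
        rw [hcard2] at hcount''
        omega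
    · push_neg at hbad
      exact ⟨S, le_refl S, hnodup, hbad, by omega⟩

theorem core (h3 : ∀ y : G, y + y + y = 0) {T : Multiset G}
    (hT0 : (0 : G) ∉ T) (hTneg : ∀ x ∈ T, -x ∉ T)
    {a b c a' b' c' ra rc : G} (hra : ra ∈ T) (hrc : rc ∈ T)
    (ha1 : a = ra ∨ a = -ra) (hb1 : b = ra ∨ b = -ra) (hc1 : c = rc ∨ c = -rc)
    (ha2 : a' = ra ∨ a' = -ra) (hb2 : b' = ra ∨ b' = -ra) (hc2 : c' = rc ∨ c' = -rc)
    (hab : a ≠ b) (hac : a ≠ c) (hbc : b ≠ c)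
    (h0 : a' + b' + c' = 0) : False := by
  have hne : ra ≠ -ra := by
    intro h
    apply hab
    rcases ha1 with rfl | rfl <;> rcases hb1 with rfl | rfl
    · rfl
    · exact h
    · exact h.symm
    · rfl
  -- case on whether a' = b' or a' = -b'
  have key : a' = b' ∨ a' + b' = 0 := by
    rcases ha2 with h1 | h1 <;> rcases hb2 with h2 | h2
    · exact Or.inl (h1.trans h2.symm)
    · exact Or.inr (by rw [h1, h2]; exact add_neg_cancel ra)
    · exact Or.inr (by rw [h1, h2]; exact neg_add_cancel ra)
    · exact Or.inl (h1.trans h2.symm)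
  rcases key with key | key
  · -- a' = b' : c' = a'
    rw [← key] at h0
    have hc'a : c' = a' := add_left_cancel (h0.trans (h3 a').symm)
    have hrc' : rc = ra ∨ rc = -ra := by
      rcases hc2 with h' | h' <;> rcases ha2 with h'' | h''
      · exact Or.inl (by rw [← h', hc'a, h''])
      · exact Or.inr (by rw [← h', hc'a, h''])
      · exact Or.inr (by rw [← neg_neg rc, ← h', hc'a, h''])
      · exact Or.inl (by rw [← neg_neg rc, ← h', hc'a, h'', neg_neg])
    rcases hrc' with rfl | h'
    · rcases ha1 with rfl | rfl <;> rcases hb1 with rfl | rfl <;>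
        rcases hc1 with rfl | rfl <;>
        first | exact hab rfl | exact hac rfl | exact hbc rfl
    · exact hTneg ra hra (h' ▸ hrc)
  · -- a' + b' = 0 : c' = 0
    have hc'0 : c' = 0 := by rw [key, zero_add] at h0; exact h0
    rcases hc2 with h' | h'
    · rw [hc'0] at h'
      exact hT0 (h'.symm ▸ hrc)
    · rw [hc'0] at h'
      have : rc = 0 := by rw [← neg_neg rc, ← h', neg_zero]
      exact hT0 (this ▸ hrc)

theorem eq_zero_of_self_eq_neg (h3 : ∀ y : G, y + y + y = 0) {x : G} (h : x = -x) :
    x = 0 := by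
  have hx2 : x + x = 0 := add_eq_zero_iff_eq_neg.mpr h
  have := h3 x
  rwa [hx2, zero_add] at this

/-- The lower bound construction. -/
theorem lower [DecidableEq G] (h3 : ∀ y : G, y + y + y = 0) {η : ℕ} (hη2 : 2 ≤ η)
    (hext : ∃ S₀ : Multiset G, η - 1 ≤ Multiset.card S₀ ∧
      ∀ k, 1 ≤ k → k ≤ 3 → ¬HasWZSS S₀ k) :
    ∃ Sl : Multiset G, Multiset.card Sl = 2 * η - 2 ∧ Sl.Nodup ∧ ¬HasWZSS Sl 3 := by
  obtain ⟨S₀, hS₀card, hS₀⟩ := hext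
  obtain ⟨T, hTle, hTcard⟩ := trim (η - 1) S₀ hS₀card
  have GoodT : ∀ k, 1 ≤ k → k ≤ 3 → ¬HasWZSS T k := fun k u v w => hS₀ k u v (mono hTle w)
  have hT0 : (0 : G) ∉ T := fun h => GoodT 1 le_rfl (by norm_num) (of_zero_mem h)
  have hTnodup : T.Nodup := by
    by_contra h
    rw [Multiset.nodup_iff_count_le_one] at h
    push_neg at h
    obtain ⟨x, hx⟩ := h
    exact GoodT 2 (by norm_num) (by norm_num) (of_two_le_count (x := x) (by omega))
  have hTneg : ∀ x ∈ T, -x ∉ T := by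
    intro x hx hnx
    by_cases hx0 : x = -x
    · exact hT0 (eq_zero_of_self_eq_neg h3 hx0 ▸ hx)
    · exact GoodT 2 (by norm_num) (by norm_num) (of_pair (pair_le hx hnx hx0))
  refine ⟨T + T.map (fun y => -y), ?_, ?_, ?_⟩
  · rw [Multiset.card_add, Multiset.card_map, hTcard]
    omega
  · rw [Multiset.nodup_add]
    refine ⟨hTnodup, hTnodup.map neg_injective, Multiset.disjoint_left.mpr ?_⟩
    intro a haT hamap
    obtain ⟨b, hb, hba⟩ := Multiset.mem_map.mp hamap
    have hnaT : -a ∈ T := by rw [← hba, neg_neg]; exact hb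
    exact hTneg a haT hnaT
  · intro hw
    obtain ⟨a, b, c, a', b', c', hle, ha, hb, hc, h0⟩ := three_elim hw
    have hSlnodup : (T + T.map (fun y => -y)).Nodup := by
      rw [Multiset.nodup_add]
      refine ⟨hTnodup, hTnodup.map neg_injective, Multiset.disjoint_left.mpr ?_⟩
      intro x hxT hxmap
      obtain ⟨b', hb', hba'⟩ := Multiset.mem_map.mp hxmap
      have : -x ∈ T := by rw [← hba', neg_neg]; exact hb'
      exact hTneg x hxT this
    have hndabc : Multiset.Nodup ({a, b, c} : Multiset G) :=
      Multiset.nodup_of_le hle hSlnodup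
    simp only [Multiset.insert_eq_cons, Multiset.nodup_cons, Multiset.mem_cons,
      Multiset.mem_singleton, Multiset.nodup_singleton, and_true] at hndabc
    push_neg at hndabc
    obtain ⟨⟨hab, hac⟩, hbc⟩ := hndabc
    have haS : a ∈ T + T.map (fun y => -y) := Multiset.mem_of_le hle (by simp)
    have hbS : b ∈ T + T.map (fun y => -y) := Multiset.mem_of_le hle (by simp)
    have hcS : c ∈ T + T.map (fun y => -y) := Multiset.mem_of_le hle (by simp)
    have hrep : ∀ x : G, x ∈ T + T.map (fun y => -y) → ∃ rx, rx ∈ T ∧ (x = rx ∨ x = -rx) := by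
      intro x hx
      rcases Multiset.mem_add.mp hx with h | h
      · exact ⟨x, h, Or.inl rfl⟩
      · obtain ⟨y, hy, hyx⟩ := Multiset.mem_map.mp h
        refine ⟨y, hy, Or.inr hyx.symm⟩
    obtain ⟨ra, hraT, ha1⟩ := hrep a haS
    obtain ⟨rb, hrbT, hb1⟩ := hrep b hbS
    obtain ⟨rc, hrcT, hc1⟩ := hrep c hcS
    have mkTwo : ∀ x x' rx : G, (x' = x ∨ x' = -x) → (x = rx ∨ x = -rx) →
        (x' = rx ∨ x' = -rx) := by
      intro x x' rx h h'
      rcases h with h | h <;> rcases h' with h' | h'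
      · exact Or.inl (h.trans h')
      · exact Or.inr (h.trans h')
      · exact Or.inr (by rw [h, h'])
      · exact Or.inl (by rw [h, h', neg_neg])
    have ha2 := mkTwo a a' ra ha ha1
    have hb2 := mkTwo b b' rb hb hb1
    have hc2 := mkTwo c c' rc hc hc1
    by_cases e1 : ra = rb
    · rw [← e1] at hb1 hb2
      exact core h3 hT0 hTneg hraT hrcT ha1 hb1 hc1 ha2 hb2 hc2 hab hac hbc h0
    by_cases e2 : ra = rc
    · rw [← e2] at hc1 hc2
      have h0' : a' + c' + b' = 0 := by rw [← h0]; abel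
      exact core h3 hT0 hTneg hraT hrbT ha1 hc1 hb1 ha2 hc2 hb2 hac hab (Ne.symm hbc) h0'
    by_cases e3 : rb = rc
    · rw [← e3] at hc1 hc2
      have h0' : b' + c' + a' = 0 := by rw [← h0]; abel
      exact core h3 hT0 hTneg hrbT hraT hb1 hc1 ha1 hb2 hc2 ha2 hbc (Ne.symm hab)
        (Ne.symm hac) h0'
    · exact GoodT 3 (by norm_num) le_rfl
        (of_signed (triple_le hraT hrbT hrcT e1 e2 e3) ha2 hb2 hc2 h0)

/-- The upper bound. -/
theorem upper [DecidableEq G] (h3 : ∀ y : G, y + y + y = 0) {η : ℕ} (hη2 : 2 ≤ η)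
    (hηmem : ∀ S : Multiset G, η ≤ Multiset.card S →
      ∃ k, 1 ≤ k ∧ k ≤ 3 ∧ HasWZSS S k) :
    ∀ S : Multiset G, 2 * η - 1 ≤ Multiset.card S → S.Nodup → HasWZSS S 3 := by
  intro S hcard hnodup
  by_cases h0S : (0 : G) ∈ S
  · have hS₁nodup : (S.erase 0).Nodup := Multiset.nodup_of_le (Multiset.erase_le _ _) hnodup
    have hS₁0 : (0 : G) ∉ S.erase 0 := hnodup.notMem_erase
    have hS₁card : Multiset.card (S.erase 0) = Multiset.card S - 1 := by
      rw [Multiset.card_erase_of_mem h0S]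
      simp only [Nat.pred_eq_sub_one]
    by_cases hpair : ∃ x ∈ S.erase 0, -x ∈ S.erase 0
    · obtain ⟨x, hx, hnx⟩ := hpair
      have hx0 : x ≠ 0 := fun h => hS₁0 (h ▸ hx)
      have hxne : x ≠ -x := fun h => hx0 (eq_zero_of_self_eq_neg h3 h)
      have hnx0 : -x ≠ 0 := fun h => hS₁0 (h ▸ hnx)
      have hxS : x ∈ S := Multiset.mem_of_le (Multiset.erase_le _ _) hx
      have hnxS : -x ∈ S := Multiset.mem_of_le (Multiset.erase_le _ _) hnx
      have hle := triple_le h0S hxS hnxS (Ne.symm hx0) (Ne.symm hnx0) hxne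
      exact ⟨{0, x, -x}, 0, by simpa using hle, by simp, by simp⟩
    · push_neg at hpair
      obtain ⟨k, hk1, hk3, hw⟩ := hηmem (S.erase 0) (by omega)
      interval_cases k
      · rw [one_iff] at hw
        exact absurd hw hS₁0
      · obtain ⟨x, y, hlexy, hxy⟩ := two_elim hw
        have hnd := Multiset.nodup_of_le hlexy hS₁nodup
        simp only [Multiset.insert_eq_cons, Multiset.nodup_cons, Multiset.mem_singleton,
          Multiset.nodup_singleton, and_true] at hnd
        rcases hxy with h | h
        · exact absurd h.symm hnd
        · have hxmem : x ∈ S.erase 0 := Multiset.mem_of_le hlexy (by simp)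
          have hymem : y ∈ S.erase 0 := Multiset.mem_of_le hlexy (by simp)
          exact absurd (h ▸ hymem) (hpair x hxmem)
      · exact mono (Multiset.erase_le _ _) hw
  · obtain ⟨S', hle', hnodup', hprop', hcount'⟩ :=
      select h3 (Multiset.card S) S hnodup h0S rfl
    obtain ⟨k, hk1, hk3, hw⟩ := hηmem S' (by omega)
    interval_cases k
    · rw [one_iff] at hw
      exact absurd (Multiset.mem_of_le hle' hw) h0S
    · obtain ⟨x, y, hlexy, hxy⟩ := two_elim hw
      have hnd := Multiset.nodup_of_le hlexy hnodup'
      simp only [Multiset.insert_eq_cons, Multiset.nodup_cons, Multiset.mem_singleton,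
        Multiset.nodup_singleton, and_true] at hnd
      rcases hxy with h | h
      · exact absurd h.symm hnd
      · have hxmem : x ∈ S' := Multiset.mem_of_le hlexy (by simp)
        have hymem : y ∈ S' := Multiset.mem_of_le hlexy (by simp)
        exact absurd (h ▸ hymem) (hprop' x hxmem)
    · exact mono hle' hw


end WZSSAux

/-- Proposition 2: for every `r ≥ 1`,
`g_A(C_3^r) = 2·η_A(C_3^r) - 1`. -/
theorem gA_eq_two_etaA_sub_one (r : ℕ) (hr : 1 ≤ r) :
    gA (Fin r → ZMod 3) = 2 * etaA (Fin r → ZMod 3) - 1 := by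
  classical
  have h3 : ∀ y : (Fin r → ZMod 3), y + y + y = 0 := by
    intro y
    funext i
    have h : ∀ z : ZMod 3, z + z + z = 0 := by decide
    exact h (y i)
  have hexp : AddMonoid.exponent (Fin r → ZMod 3) = 3 := by
    rw [AddMonoid.exponent_pi]
    have h : (AddMonoid.exponent (ZMod 3)) = 3 := ZMod.exponent 3
    simp only [h]
    refine Nat.dvd_antisymm (Finset.lcm_dvd fun i _ => dvd_rfl) ?_
    exact Finset.dvd_lcm (Finset.mem_univ (⟨0, hr⟩ : Fin r))
  have hηdef : etaA (Fin r → ZMod 3) =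
      sInf {ℓ : ℕ | ∀ S : Multiset (Fin r → ZMod 3), ℓ ≤ Multiset.card S →
        ∃ k, 1 ≤ k ∧ k ≤ 3 ∧ HasWZSS S k} := by
    unfold etaA
    rw [hexp]
  have hgdef : gA (Fin r → ZMod 3) =
      sInf {ℓ : ℕ | ∀ S : Multiset (Fin r → ZMod 3), ℓ ≤ Multiset.card S → S.Nodup →
        HasWZSS S 3} := by
    unfold gA
    rw [hexp]
  set ηset : Set ℕ := {ℓ : ℕ | ∀ S : Multiset (Fin r → ZMod 3), ℓ ≤ Multiset.card S →
    ∃ k, 1 ≤ k ∧ k ≤ 3 ∧ HasWZSS S k} with hηsetdef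
  set gset : Set ℕ := {ℓ : ℕ | ∀ S : Multiset (Fin r → ZMod 3), ℓ ≤ Multiset.card S →
    S.Nodup → HasWZSS S 3} with hgsetdef
  -- ηset is nonempty
  have hηne : (Fintype.card (Fin r → ZMod 3) + 1) ∈ ηset := by
    intro S hcard
    have hnd : ¬ S.Nodup := by
      intro hnd
      have h1 : S.toFinset.card = Multiset.card S := Multiset.toFinset_card_of_nodup hnd
      have h2 : S.toFinset.card ≤ Fintype.card (Fin r → ZMod 3) := Finset.card_le_univ _
      omega
    rw [Multiset.nodup_iff_count_le_one] at hnd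
    push_neg at hnd
    obtain ⟨x, hx⟩ := hnd
    exact ⟨2, by norm_num, by norm_num, WZSSAux.of_two_le_count (x := x) (by omega)⟩
  set η : ℕ := sInf ηset with hηd
  have hηmem : η ∈ ηset := Nat.sInf_mem ⟨_, hηne⟩
  -- η ≥ 2
  have hη2 : 2 ≤ η := by
    by_contra h
    push_neg at h
    set e : Fin r → ZMod 3 := fun _ => 1 with he
    have hene : e ≠ 0 := by
      intro h'
      have := congrFun h' ⟨0, hr⟩
      simp only [he, Pi.zero_apply] at this
      exact one_ne_zero this
    obtain ⟨k, hk1, hk3, hw⟩ := hηmem {e} (by simp; omega)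
    have hkle : k ≤ 1 := by
      obtain ⟨t₁, t₂, hle, hcard, _⟩ := hw
      have := Multiset.card_le_card hle
      simp only [Multiset.card_singleton] at this
      omega
    have : k = 1 := by omega
    subst this
    rw [WZSSAux.one_iff] at hw
    rw [Multiset.mem_singleton] at hw
    exact hene hw.symm
  -- extremal sequence for η - 1
  have hnm : η - 1 ∉ ηset := Nat.notMem_of_lt_sInf (by omega)
  have hext : ∃ S₀ : Multiset (Fin r → ZMod 3), η - 1 ≤ Multiset.card S₀ ∧
      ∀ k, 1 ≤ k → k ≤ 3 → ¬HasWZSS S₀ k := by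
    simp only [hηsetdef, Set.mem_setOf_eq] at hnm
    push_neg at hnm
    obtain ⟨S₀, h1, h2⟩ := hnm
    exact ⟨S₀, h1, h2⟩
  obtain ⟨Sl, hSlcard, hSlnodup, hSlno3⟩ := WZSSAux.lower h3 hη2 hext
  have hlow : (2 * η - 2) ∉ gset := by
    intro h
    exact hSlno3 (h Sl (by omega) hSlnodup)
  have hup : (2 * η - 1) ∈ gset := by
    intro S hcard hnodup
    exact WZSSAux.upper h3 hη2 (fun S' h' => hηmem S' h') S hcard hnodup
  have hglb : ∀ m ∈ gset, 2 * η - 1 ≤ m := by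
    intro m hm
    by_contra hlt
    push_neg at hlt
    apply hlow
    intro S hc hn
    exact hm S (by omega) hn
  rw [hgdef, hηdef]
  exact le_antisymm (Nat.sInf_le hup) (le_csInf ⟨_, hup⟩ hglb)
end

section
/- Let A = {−1,1}. For every integer r ≥ 1, η_A(C_3^r) ≥ 2^{r−1} + 1; equivalently, the sequence consisting of all sums Σ_{i∈I} e_i over subsets I ⊆ {1,…,r} of odd cardinality (a sequence of length 2^{r−1} over C_3^r) has no nonempty A-zero-sum subsequence of length at most 3. -/
-- auxiliary definitions

def fv (r : ℕ) (I : Finset (Fin r)) : Fin r → ZMod 3 :=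
  ∑ i ∈ I, Pi.single i 1

lemma fv_apply (r : ℕ) (I : Finset (Fin r)) (j : Fin r) :
    fv r I j = if j ∈ I then 1 else 0 := by
  simp [fv, Finset.sum_apply, Pi.single_apply, Finset.sum_ite_eq]

lemma fv_inj (r : ℕ) : Function.Injective (fv r) := by
  intro I J h
  ext j
  have hj := congrFun h j
  simp only [fv_apply] at hj
  constructor
  · intro hI; by_contra hJ; rw [if_pos hI, if_neg hJ] at hj; exact absurd hj (by decide)
  · intro hJ; by_contra hI; rw [if_neg hI, if_pos hJ] at hj; exact absurd hj (by decide)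

lemma aux_case (r : ℕ) (s₁ s₂ : Multiset (Finset (Fin r)))
    (hodd : ∀ I ∈ s₁ + s₂, Odd I.card) (hnd : (s₁ + s₂).Nodup)
    (h1 : 1 ≤ Multiset.card s₁ + Multiset.card s₂)
    (h3 : Multiset.card s₁ + Multiset.card s₂ ≤ 3)
    (hle : Multiset.card s₂ ≤ Multiset.card s₁)
    (hsum : (s₁.map (fv r)).sum = (s₂.map (fv r)).sum) : False := by
  obtain ⟨h, h'⟩ | ⟨h, h'⟩ | ⟨h, h'⟩ | ⟨h, h'⟩ | ⟨h, h'⟩ :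
      (Multiset.card s₁ = 1 ∧ Multiset.card s₂ = 0) ∨
      (Multiset.card s₁ = 1 ∧ Multiset.card s₂ = 1) ∨
      (Multiset.card s₁ = 2 ∧ Multiset.card s₂ = 0) ∨
      (Multiset.card s₁ = 2 ∧ Multiset.card s₂ = 1) ∨
      (Multiset.card s₁ = 3 ∧ Multiset.card s₂ = 0) := by omega
  -- case (1,0)
  · obtain ⟨I, rfl⟩ := Multiset.card_eq_one.1 h
    rw [Multiset.card_eq_zero] at h'; subst h'
    have hoI : Odd I.card := hodd I (by simp)
    obtain ⟨j, hj⟩ : I.Nonempty := Finset.card_pos.1 hoI.pos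
    have hz0 : fv r I = 0 := by simpa using hsum
    have hz := congrFun hz0 j
    rw [Pi.zero_apply, fv_apply, if_pos hj] at hz
    exact absurd hz (by decide)
  -- case (1,1)
  · obtain ⟨I, rfl⟩ := Multiset.card_eq_one.1 h
    obtain ⟨J, rfl⟩ := Multiset.card_eq_one.1 h'
    have : I = J := fv_inj r (by simpa using hsum)
    subst this
    simp at hnd
  -- case (2,0)
  · obtain ⟨I, J, rfl⟩ := Multiset.card_eq_two.1 h
    rw [Multiset.card_eq_zero] at h'; subst h'
    have hoI : Odd I.card := hodd I (by simp)
    obtain ⟨j, hj⟩ : I.Nonempty := Finset.card_pos.1 hoI.pos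
    have hs : fv r I + fv r J = 0 := by simpa using hsum
    have hz := congrFun hs j
    simp only [Pi.add_apply, Pi.zero_apply, fv_apply] at hz
    rw [if_pos hj] at hz
    split_ifs at hz <;> exact absurd hz (by decide)
  -- case (2,1)
  · obtain ⟨I, J, rfl⟩ := Multiset.card_eq_two.1 h
    obtain ⟨K, rfl⟩ := Multiset.card_eq_one.1 h'
    have hs : fv r I + fv r J = fv r K := by simpa using hsum
    have key : ∀ j : Fin r, (¬(j ∈ I ∧ j ∈ J)) ∧ (j ∈ K ↔ j ∈ I ∨ j ∈ J) := by
      intro j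
      have hj := congrFun hs j
      simp only [Pi.add_apply, fv_apply] at hj
      refine ⟨?_, ?_, ?_⟩
      · rintro ⟨h1', h2'⟩
        rw [if_pos h1', if_pos h2'] at hj
        split_ifs at hj <;> exact absurd hj (by decide)
      · intro hK
        by_contra hc
        push_neg at hc
        rw [if_neg hc.1, if_neg hc.2, if_pos hK] at hj
        exact absurd hj (by decide)
      · rintro (h1' | h1') <;> by_contra hK
        · rw [if_pos h1', if_neg hK] at hj
          split_ifs at hj <;> exact absurd hj (by decide)
        · rw [if_pos h1', if_neg hK] at hj
          split_ifs at hj <;> exact absurd hj (by decide)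
    have hIJ : Disjoint I J := Finset.disjoint_left.2 fun {a} h1' h2' => (key a).1 ⟨h1', h2'⟩
    have hU : K = I ∪ J := Finset.ext fun a => by rw [(key a).2, Finset.mem_union]
    have hcardK : K.card = I.card + J.card := by
      rw [hU, Finset.card_union_of_disjoint hIJ]
    have hoI : Odd I.card := hodd I (by simp)
    have hoJ : Odd J.card := hodd J (by simp)
    have hoK : Odd K.card := hodd K (by simp)
    rw [Nat.odd_iff] at hoI hoJ hoK
    omega
  -- case (3,0)
  · obtain ⟨I, J, K, rfl⟩ := Multiset.card_eq_three.1 h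
    rw [Multiset.card_eq_zero] at h'; subst h'
    have hs : fv r I + fv r J + fv r K = 0 := by
      have := hsum; simp at this; simpa [add_assoc] using this
    have : I = J := by
      ext j
      have hj := congrFun hs j
      simp only [Pi.add_apply, Pi.zero_apply, fv_apply] at hj
      constructor
      · intro hI; by_contra hJ
        rw [if_pos hI, if_neg hJ] at hj
        split_ifs at hj <;> exact absurd hj (by decide)
      · intro hJ; by_contra hI
        rw [if_neg hI, if_pos hJ] at hj
        split_ifs at hj <;> exact absurd hj (by decide)
    subst this
    simp at hnd

lemma card_odd_subsets (r : ℕ) (hr : 1 ≤ r) :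
    (Finset.univ.filter (fun I : Finset (Fin r) => Odd I.card)).card = 2 ^ (r - 1) := by
  classical
  set i0 : Fin r := ⟨0, hr⟩ with hi0
  set g : Finset (Fin r) → Finset (Fin r) :=
    fun I => if i0 ∈ I then I.erase i0 else insert i0 I with hg
  have flip : ∀ I : Finset (Fin r), Odd (g I).card ↔ ¬ Odd I.card := by
    intro I
    simp only [hg]
    split_ifs with hmem
    · have h1 : 1 ≤ I.card := Finset.card_pos.2 ⟨i0, hmem⟩
      rw [Finset.card_erase_of_mem hmem, Nat.odd_iff, Nat.odd_iff]
      omega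
    · rw [Finset.card_insert_of_notMem hmem, Nat.odd_iff, Nat.odd_iff]
      omega
  have ginv : ∀ I : Finset (Fin r), g (g I) = I := by
    intro I
    simp only [hg]
    by_cases hmem : i0 ∈ I
    · simp [hmem, Finset.insert_erase hmem]
    · simp [hmem, Finset.erase_insert hmem]
  have key : (Finset.univ.filter (fun I : Finset (Fin r) => Odd I.card)).card
      = (Finset.univ.filter (fun I : Finset (Fin r) => ¬ Odd I.card)).card := by
    apply Finset.card_bij' (fun I _ => g I) (fun I _ => g I)
    · intro a ha
      simp only [Finset.mem_filter, Finset.mem_univ, true_and] at ha ⊢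
      exact fun hgc => ((flip a).1 hgc) ha
    · intro a ha
      simp only [Finset.mem_filter, Finset.mem_univ, true_and] at ha ⊢
      exact (flip a).2 ha
    · intro a _; exact ginv a
    · intro a _; exact ginv a
  have hsplit := Finset.card_filter_add_card_filter_not
    (s := (Finset.univ : Finset (Finset (Fin r)))) (fun I : Finset (Fin r) => Odd I.card)
  rw [Finset.card_univ, Fintype.card_finset, Fintype.card_fin] at hsplit
  have hpow : 2 ^ r = 2 ^ (r - 1) * 2 := by
    conv_lhs => rw [show r = (r - 1) + 1 by omega]
    rw [pow_succ]
  omega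

/-- Remark 1: for every `r ≥ 1`, `η_A(C_3^r) ≥ 2^(r-1) + 1`;
equivalently, the sequence of all sums `Σ_{i ∈ I} e_i` over the subsets
`I ⊆ {1, …, r}` of odd cardinality (a sequence of length `2^(r-1)`) has no nonempty
`{-1,1}`-zero-sum subsequence of length at most `3`. -/
theorem etaA_ge_two_pow (r : ℕ) (hr : 1 ≤ r) :
    2 ^ (r - 1) + 1 ≤ etaA (Fin r → ZMod 3) ∧
    ¬ ∃ k, 1 ≤ k ∧ k ≤ 3 ∧
      HasWZSS (((Finset.univ.filter
          (fun I : Finset (Fin r) => Odd I.card)).val).map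
        (fun I => ∑ i ∈ I, (Pi.single i 1 : Fin r → ZMod 3))) k := by
  classical
  set S : Multiset (Fin r → ZMod 3) := ((Finset.univ.filter
      (fun I : Finset (Fin r) => Odd I.card)).val).map (fv r) with hS
  have hSrw : ((Finset.univ.filter
      (fun I : Finset (Fin r) => Odd I.card)).val).map
        (fun I => ∑ i ∈ I, (Pi.single i 1 : Fin r → ZMod 3)) = S := rfl
  have hSnodup : S.Nodup :=
    Multiset.Nodup.map (fv_inj r) (Finset.univ.filter _).nodup
  have hScard : Multiset.card S = 2 ^ (r - 1) := by
    rw [hS, Multiset.card_map]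
    exact card_odd_subsets r hr
  -- the second conjunct
  have hmain : ¬ ∃ k, 1 ≤ k ∧ k ≤ 3 ∧ HasWZSS S k := by
    rintro ⟨k, hk1, hk3, t₁, t₂, hsub, hcard, hsum⟩
    set g : (Fin r → ZMod 3) → Finset (Fin r) :=
      fun v => Finset.univ.filter (fun i => v i = 1) with hgdef
    have hgf : ∀ I : Finset (Fin r), g (fv r I) = I := by
      intro I
      ext j
      simp only [hgdef, Finset.mem_filter, Finset.mem_univ, true_and, fv_apply]
      constructor
      · intro hone
        by_contra hj
        rw [if_neg hj] at hone
        exact absurd hone (by decide)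
      · intro hj; rw [if_pos hj]
    have ht : ∀ x ∈ t₁ + t₂, ∃ I : Finset (Fin r), Odd I.card ∧ fv r I = x := by
      intro x hx
      have hxS := Multiset.mem_of_le hsub hx
      rw [hS, Multiset.mem_map] at hxS
      obtain ⟨I, hI, rfl⟩ := hxS
      rw [Finset.mem_val, Finset.mem_filter] at hI
      exact ⟨I, hI.2, rfl⟩
    have hback : ∀ x ∈ t₁ + t₂, fv r (g x) = x := by
      intro x hx
      obtain ⟨I, _, rfl⟩ := ht x hx
      rw [hgf]
    have e1 : (t₁.map g).map (fv r) = t₁ := by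
      rw [Multiset.map_map]
      exact (Multiset.map_congr rfl fun x hx =>
        hback x (Multiset.mem_add.2 (Or.inl hx))).trans (Multiset.map_id t₁)
    have e2 : (t₂.map g).map (fv r) = t₂ := by
      rw [Multiset.map_map]
      exact (Multiset.map_congr rfl fun x hx =>
        hback x (Multiset.mem_add.2 (Or.inr hx))).trans (Multiset.map_id t₂)
    have hndt : (t₁ + t₂).Nodup := Multiset.nodup_of_le hsub hSnodup
    have hnds : (t₁.map g + t₂.map g).Nodup := by
      rw [← Multiset.map_add]
      refine Multiset.Nodup.map_on ?_ hndt
      intro x hx y hy hxy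
      rw [← hback x hx, ← hback y hy, hxy]
    have hodds : ∀ I ∈ t₁.map g + t₂.map g, Odd I.card := by
      intro I hI
      rw [← Multiset.map_add, Multiset.mem_map] at hI
      obtain ⟨x, hx, rfl⟩ := hI
      obtain ⟨J, hJ, rfl⟩ := ht x hx
      rw [hgf]; exact hJ
    have hcards : Multiset.card (t₁.map g) + Multiset.card (t₂.map g) = k := by
      rw [Multiset.card_map, Multiset.card_map, ← Multiset.card_add, hcard]
    have hsums : ((t₁.map g).map (fv r)).sum = ((t₂.map g).map (fv r)).sum := by
      rw [e1, e2]; exact hsum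
    rcases le_total (Multiset.card (t₂.map g)) (Multiset.card (t₁.map g)) with hle | hle
    · exact aux_case r (t₁.map g) (t₂.map g) hodds hnds (by omega) (by omega) hle hsums
    · refine aux_case r (t₂.map g) (t₁.map g) ?_ ?_ (by omega) (by omega) hle hsums.symm
      · intro I hI; exact hodds I (by rwa [add_comm])
      · rwa [add_comm]
  refine ⟨?_, by rwa [hSrw]⟩
  -- exponent computation
  have hexp : AddMonoid.exponent (Fin r → ZMod 3) = 3 := by
    rw [AddMonoid.exponent_pi]
    refine Nat.dvd_antisymm (Finset.lcm_dvd fun i _ => by rw [ZMod.exponent]) ?_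
    have hd := Finset.dvd_lcm (s := (Finset.univ : Finset (Fin r)))
      (f := fun _ : Fin r => AddMonoid.exponent (ZMod 3)) (Finset.mem_univ ⟨0, hr⟩)
    rw [ZMod.exponent] at hd
    simpa using hd
  rw [etaA]
  refine le_csInf ?_ ?_
  · -- nonempty: large ℓ works by pigeonhole
    refine ⟨3 ^ r + 1, fun T hT => ?_⟩
    have hx : ∃ x, 2 ≤ T.count x := by
      by_contra hc
      push_neg at hc
      have hnd : T.Nodup := Multiset.nodup_iff_count_le_one.2 fun a => by
        have := hc a; omega
      have : Multiset.card T ≤ 3 ^ r := by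
        classical
        have h1 : Multiset.card T = T.toFinset.card := (Multiset.toFinset_card_of_nodup hnd).symm
        have h2 : T.toFinset.card ≤ Fintype.card (Fin r → ZMod 3) := Finset.card_le_univ _
        have h3 : Fintype.card (Fin r → ZMod 3) = 3 ^ r := by
          rw [Fintype.card_fun, ZMod.card, Fintype.card_fin]
        omega
      omega
    obtain ⟨x, hx⟩ := hx
    refine ⟨2, by omega, by rw [hexp]; omega, {x}, {x}, ?_, by simp, rfl⟩
    rw [Multiset.le_iff_count]
    intro a
    by_cases ha : a = x
    · subst ha
      simpa using hx
    · simp [Multiset.count_singleton, ha]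
  · intro ℓ hℓ
    by_contra hc
    push_neg at hc
    obtain ⟨k, hk1, hk3, hW⟩ := hℓ S (by omega)
    exact hmain ⟨k, hk1, by omega, hW⟩
end

section
/- Let A = {−1,1} and let r > 3 be odd. Define δ = (r−3)/2 if r ≡ 1 (mod 4) and δ = (r−5)/2 if r ≡ 3 (mod 4). Then η_A(C_3^r) ≥ 2^{r−1} + binom(r−1, δ); equivalently, there exists a sequence over C_3^r of length 2^{r−1} + binom(r−1, δ) − 1 with no nonempty A-zero-sum subsequence of length at most 3. -/
/-!
Let `E ⊆ 𝔽₃⁵` be a set of `20` points such that `E ∪ -E` is a cap (no three collinear points) and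
`E ∩ -E = ∅`, and put `D = E × {±1}^(r-5) ⊆ 𝔽₃^r`. Three elements of `{±1} ⊆ 𝔽₃` in arithmetic
progression are equal, so `D ∪ -D = (E ∪ -E) × {±1}^(r-5)` is again a cap, and still
`D ∩ -D = ∅`. A `{±1}`-weighted zero sum of at most three distinct elements of such a set would
force `a = -b` for two of them or three collinear points in `D ∪ -D`, so `D` has no short
`{±1}`-zero-sum subsequence, and `|D| = 20·2^(r-5) = 2^(r-1) + 2^(r-3) ≥ 2^(r-1) + C(r-1, δ)`.
-/

open Pointwise

/-- `D ∪ -D` is a cap (in an `𝔽₃`-vector space `ThreeAPFree` says that no three distinct points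
are collinear) from which `D` takes exactly one point of each pair `±x`. -/
structure IsCapHalf {G : Type*} [AddCommGroup G] (D : Set G) : Prop where
  disjoint_neg : Disjoint D (-D)
  threeAPFree : ThreeAPFree (D ∪ -D)

theorem neg_eq_add_self_of_zmod_three {G : Type*} [AddCommGroup G] [Module (ZMod 3) G] (x : G) :
    -x = x + x :=
  neg_eq_of_add_eq_zero_left <| by
    rw [← ZModModule.char_nsmul_eq_zero 3 x]
    abel

theorem ZModModule.exponent_eq_three {G : Type*} [AddCommGroup G] [Module (ZMod 3) G]
    [Nontrivial G] : AddMonoid.exponent G = 3 :=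
  (AddMonoid.exponent_eq_prime_iff Nat.prime_three).mpr fun g hg =>
    addOrderOf_eq_prime (ZModModule.char_nsmul_eq_zero 3 g) hg

namespace IsCapHalf

variable {G H : Type*} [AddCommGroup G] [AddCommGroup H] {D : Set G} {a b c : G}

theorem add_ne_zero (hD : IsCapHalf D) (ha : a ∈ D) (hb : b ∈ D) : a + b ≠ 0 := fun h =>
  Set.disjoint_left.mp hD.disjoint_neg hb (by rwa [Set.mem_neg, neg_eq_of_add_eq_zero_left h])

theorem ne_zero (hD : IsCapHalf D) (ha : a ∈ D) : a ≠ 0 := fun h =>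
  hD.add_ne_zero ha ha (by rw [h, add_zero])

theorem prod (hD : IsCapHalf D) {T : Set H} (hT : ThreeAPFree T) (hTneg : -T = T) :
    IsCapHalf (D ×ˢ T) where
  disjoint_neg := Set.disjoint_left.mpr fun _ ha hna =>
    Set.disjoint_left.mp hD.disjoint_neg ha.1 hna.1
  threeAPFree := by
    rw [Set.neg_prod, hTneg, ← Set.union_prod]
    exact hD.threeAPFree.prod hT

theorem image (hD : IsCapHalf D) (φ : G ≃+ H) : IsCapHalf (φ '' D) := by
  have hneg : -(φ '' D) = φ '' (-D) := by
    ext x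
    simp [Set.mem_neg, neg_eq_iff_eq_neg]
  refine ⟨?_, ?_⟩
  · rw [hneg]
    exact (Set.disjoint_image_iff φ.injective).mpr hD.disjoint_neg
  · rw [hneg, ← Set.image_union]
    exact hD.threeAPFree.image' φ φ.injective.injOn

variable [Module (ZMod 3) G]

theorem add_add_ne_zero (hD : IsCapHalf D) (ha : a ∈ D) (hb : b ∈ D) (hc : c ∈ D) (hab : a ≠ b) :
    a + b + c ≠ 0 := fun h =>
  hab <| hD.threeAPFree (Or.inl ha) (Or.inl hb) (Or.inl hc) <| by
    rw [← neg_eq_add_self_of_zmod_three]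
    exact eq_neg_of_add_eq_zero_left (by rw [← h]; abel)

-- `a + b = c` puts `a, -c, b` in arithmetic progression, as `c = -c + -c`.
theorem add_ne (hD : IsCapHalf D) (ha : a ∈ D) (hb : b ∈ D) (hc : c ∈ D) : a + b ≠ c := fun h =>
  have hac : a = -c := hD.threeAPFree (Or.inl ha) (Or.inr (by rwa [Set.mem_neg, neg_neg]))
    (Or.inl hb) <| by rw [← neg_eq_add_self_of_zmod_three, neg_neg, ← h]
  Set.disjoint_left.mp hD.disjoint_neg ha (by rwa [Set.mem_neg, hac, neg_neg])

theorem multiset_sum_ne_zero (hD : IsCapHalf D) {t : Multiset G} (htD : ∀ x ∈ t, x ∈ D)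
    (hnd : t.Nodup) (h1 : 1 ≤ Multiset.card t) (h3 : Multiset.card t ≤ 3) : t.sum ≠ 0 := by
  obtain h | h | h : Multiset.card t = 1 ∨ Multiset.card t = 2 ∨ Multiset.card t = 3 := by omega
  · obtain ⟨a, rfl⟩ := Multiset.card_eq_one.mp h
    simpa using hD.ne_zero (htD a (by simp))
  · obtain ⟨a, b, rfl⟩ := Multiset.card_eq_two.mp h
    simpa using hD.add_ne_zero (htD a (by simp)) (htD b (by simp))
  · obtain ⟨a, b, c, rfl⟩ := Multiset.card_eq_three.mp h
    have hab : a ≠ b := by simp_all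
    simpa [add_assoc] using hD.add_add_ne_zero (htD a (by simp)) (htD b (by simp))
      (htD c (by simp)) hab

theorem not_hasWZSS (hD : IsCapHalf D) {S : Finset G} (hSD : (S : Set G) ⊆ D) {k : ℕ}
    (hk1 : 1 ≤ k) (hk3 : k ≤ 3) : ¬ HasWZSS S.val k := by
  rintro ⟨t₁, t₂, hle, hcard, hsum⟩
  wlog h21 : Multiset.card t₂ ≤ Multiset.card t₁ generalizing t₁ t₂
  · exact this t₂ t₁ (by rwa [add_comm]) (by rwa [add_comm]) hsum.symm (by omega)
  have hnd : (t₁ + t₂).Nodup := Multiset.nodup_of_le hle S.nodup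
  have htD : ∀ x ∈ t₁ + t₂, x ∈ D := fun x hx => hSD (Multiset.mem_of_le hle hx)
  rw [Multiset.card_add] at hcard
  obtain h2 | h2 : Multiset.card t₂ = 0 ∨ Multiset.card t₂ = 1 := by omega
  · obtain rfl := Multiset.card_eq_zero.mp h2
    rw [add_zero] at hnd htD
    rw [Multiset.card_zero, add_zero] at hcard
    exact hD.multiset_sum_ne_zero htD hnd (by omega) (by omega) (by simpa using hsum)
  obtain ⟨c, rfl⟩ := Multiset.card_eq_one.mp h2
  obtain h1 | h1 : Multiset.card t₁ = 1 ∨ Multiset.card t₁ = 2 := by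
    simp only [Multiset.card_singleton] at hcard; omega
  · obtain ⟨a, rfl⟩ := Multiset.card_eq_one.mp h1
    simp only [Multiset.sum_singleton] at hsum
    subst hsum
    simp at hnd
  · obtain ⟨a, b, rfl⟩ := Multiset.card_eq_two.mp h1
    simp only [Multiset.insert_eq_cons, Multiset.sum_cons, Multiset.sum_singleton] at hsum
    exact hD.add_ne (htD a (by simp)) (htD b (by simp)) (htD c (by simp)) hsum

end IsCapHalf

/-- One point out of each pair `±x` of a symmetric cap of size `40` in `𝔽₃⁵`. -/
def capRep : Finset (Fin 5 → ZMod 3) :=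
  {![0,0,1,0,1], ![0,0,1,2,0], ![0,0,1,2,1], ![0,1,0,2,1], ![0,1,2,0,2],
   ![1,0,1,0,1], ![1,0,2,0,0], ![1,0,2,0,1], ![1,0,2,1,0], ![1,0,2,1,2],
   ![1,1,1,1,0], ![1,1,1,2,0], ![1,1,1,2,1], ![1,1,2,0,2], ![1,1,2,2,0],
   ![1,2,0,2,1], ![1,2,1,0,0], ![1,2,1,0,2], ![1,2,1,2,0], ![1,2,1,2,1]}

theorem card_capRep : capRep.card = 20 := by decide

theorem isCapHalf_capRep : IsCapHalf (capRep : Set (Fin 5 → ZMod 3)) where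
  disjoint_neg := by
    rw [← Finset.coe_neg, Finset.disjoint_coe]
    decide
  threeAPFree := by
    rw [← Finset.coe_neg, ← Finset.coe_union]
    decide +kernel

theorem threeAPFree_one_neg_one : ThreeAPFree (({1, -1} : Finset (ZMod 3)) : Set (ZMod 3)) := by
  decide

def Fin.appendAddEquiv (M : Type*) [AddCommMonoid M] (m n : ℕ) :
    (Fin m → M) × (Fin n → M) ≃+ (Fin (m + n) → M) where
  __ := Fin.appendEquiv m n
  map_add' x y := by
    funext i
    refine Fin.addCases (fun j => ?_) (fun j => ?_) i <;> simp

theorem exists_isCapHalf_card {r : ℕ} (hr : 5 ≤ r) :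
    ∃ D : Finset (Fin r → ZMod 3), IsCapHalf (D : Set (Fin r → ZMod 3)) ∧
      D.card = 20 * 2 ^ (r - 5) := by
  obtain ⟨n, rfl⟩ := Nat.exists_eq_add_of_le hr
  set T := Fintype.piFinset fun _ : Fin n => ({1, -1} : Finset (ZMod 3))
  have hT : ThreeAPFree (T : Set (Fin n → ZMod 3)) := by
    rw [Fintype.coe_piFinset]
    exact threeAPFree_pi fun _ => threeAPFree_one_neg_one
  have hTneg : -(T : Set (Fin n → ZMod 3)) = T := by
    ext v
    simp [T, or_comm]
  refine ⟨(capRep ×ˢ T).image (Fin.appendAddEquiv (ZMod 3) 5 n), ?_, ?_⟩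
  · rw [Finset.coe_image, Finset.coe_product]
    exact (isCapHalf_capRep.prod hT hTneg).image _
  · rw [Finset.card_image_of_injective _ (Fin.appendAddEquiv _ 5 n).injective,
      Finset.card_product, card_capRep, Fintype.card_piFinset_const, Nat.add_sub_cancel_left]
    rfl

theorem Nat.choose_two_mul_add_two_le_four_pow (k : ℕ) : (2 * k + 2).choose k ≤ 4 ^ k := by
  induction k with
  | zero => simp
  | succ k ih =>
    -- `choose (2k+4) (k+1) / choose (2k+2) k = (2k+3)(2k+4) / ((k+1)(k+3)) ≤ 4`
    have h₁ := Nat.add_one_mul_choose_eq (2 * k + 2) k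
    have h₂ := Nat.choose_mul_succ_eq (2 * k + 3) (k + 1)
    rw [show 2 * k + 3 + 1 - (k + 1) = k + 3 by omega] at h₂
    rw [show 2 * (k + 1) + 2 = 2 * k + 3 + 1 by ring, pow_succ]
    refine Nat.le_of_mul_le_mul_left ?_ (show 0 < (k + 1) * (k + 3) by positivity)
    calc (k + 1) * (k + 3) * (2 * k + 3 + 1).choose (k + 1)
        = (k + 1) * ((2 * k + 3).choose (k + 1) * (2 * k + 3 + 1)) := by rw [h₂]; ring
      _ = (2 * k + 4) * ((2 * k + 2 + 1) * (2 * k + 2).choose k) := by rw [h₁]; ring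
      _ ≤ (2 * k + 4) * ((2 * k + 3) * 4 ^ k) := by gcongr
      _ ≤ (k + 1) * (k + 3) * (4 ^ k * 4) := by nlinarith [Nat.zero_le (4 ^ k)]

theorem two_pow_add_choose_le {r : ℕ} (hr : 3 < r) (hodd : Odd r) :
    2 ^ (r - 1) + (r - 1).choose (if r % 4 = 1 then (r - 3) / 2 else (r - 5) / 2)
      ≤ 20 * 2 ^ (r - 5) := by
  obtain ⟨k, rfl⟩ : ∃ k, r = 2 * k + 5 := by obtain ⟨m, rfl⟩ := hodd; exact ⟨m - 2, by omega⟩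
  have hδ : (2 * k + 4).choose (if (2 * k + 5) % 4 = 1 then (2 * k + 2) / 2 else 2 * k / 2)
      ≤ (2 * k + 4).choose (k + 1) := by
    split_ifs
    · rw [show (2 * k + 2) / 2 = k + 1 by omega]
    · rw [show 2 * k / 2 = k by omega]
      exact Nat.choose_le_succ_of_lt_half_left (by omega)
  have hmid := Nat.choose_two_mul_add_two_le_four_pow (k + 1)
  rw [show 2 * (k + 1) + 2 = 2 * k + 4 by ring] at hmid
  simp only [show 2 * k + 5 - 1 = 2 * k + 4 by omega, show 2 * k + 5 - 3 = 2 * k + 2 by omega,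
    show 2 * k + 5 - 5 = 2 * k by omega]
  calc 2 ^ (2 * k + 4) + _ ≤ 2 ^ (2 * k + 4) + 4 ^ (k + 1) := by gcongr; exact hδ.trans hmid
    _ = 20 * 2 ^ (2 * k) := by rw [pow_add, pow_mul]; ring

section etaA

variable {G : Type*} [AddCommGroup G] [Fintype G]

theorem hasWZSS_two_of_card_lt {S : Multiset G} (hS : Fintype.card G < Multiset.card S) :
    HasWZSS S 2 := by
  classical
  have hnd : ¬ S.Nodup := fun h =>
    (Multiset.toFinset_card_of_nodup h ▸ Finset.card_le_univ S.toFinset).not_gt hS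
  obtain ⟨a, ha⟩ : ∃ a, a ::ₘ a ::ₘ 0 ≤ S := by simpa [Multiset.nodup_iff_le] using hnd
  exact ⟨{a}, {a}, by simpa [Multiset.singleton_add] using ha, rfl, rfl⟩

theorem card_lt_etaA (hexp : 2 ≤ AddMonoid.exponent G) {S : Multiset G}
    (hS : ¬ ∃ k, 1 ≤ k ∧ k ≤ AddMonoid.exponent G ∧ HasWZSS S k) :
    Multiset.card S < etaA G :=
  le_csInf ⟨Fintype.card G + 1, fun _ hT => ⟨2, one_le_two, hexp, hasWZSS_two_of_card_lt hT⟩⟩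
    fun _ hℓ => not_le.mp fun hle => hS (hℓ S hle)

end etaA

/-- Proposition 4: for odd `r > 3`, with `δ = (r-3)/2` if
`r ≡ 1 (mod 4)` and `δ = (r-5)/2` if `r ≡ 3 (mod 4)`,
`η_A(C_3^r) ≥ 2^(r-1) + C(r-1, δ)`; equivalently, there is a sequence over `C_3^r`
of length `2^(r-1) + C(r-1, δ) - 1` with no nonempty `{-1,1}`-zero-sum subsequence
of length at most `3`. -/
theorem etaA_lower_odd (r : ℕ) (hr : 3 < r) (hodd : Odd r) :
    2 ^ (r - 1) + Nat.choose (r - 1) (if r % 4 = 1 then (r - 3) / 2 else (r - 5) / 2)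
        ≤ etaA (Fin r → ZMod 3) ∧
    ∃ S : Multiset (Fin r → ZMod 3),
      Multiset.card S =
        2 ^ (r - 1) + Nat.choose (r - 1) (if r % 4 = 1 then (r - 3) / 2 else (r - 5) / 2) - 1 ∧
      ¬ ∃ k, 1 ≤ k ∧ k ≤ 3 ∧ HasWZSS S k := by
  have hr5 : 5 ≤ r := by obtain ⟨m, rfl⟩ := hodd; omega
  have : Nonempty (Fin r) := ⟨⟨0, by omega⟩⟩
  have hexp : AddMonoid.exponent (Fin r → ZMod 3) = 3 := ZModModule.exponent_eq_three
  obtain ⟨D, hD, hcard⟩ := exists_isCapHalf_card hr5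
  obtain ⟨S, hSD, hScard⟩ := Finset.exists_subset_card_eq
    ((Nat.sub_le _ 1).trans ((two_pow_add_choose_le hr hodd).trans hcard.ge))
  have hfree : ¬ ∃ k, 1 ≤ k ∧ k ≤ 3 ∧ HasWZSS S.val k := fun ⟨_, hk1, hk3, hk⟩ =>
    hD.not_hasWZSS (Finset.coe_subset.mpr hSD) hk1 hk3 hk
  refine ⟨?_, S.val, hScard, hfree⟩
  have hlt := card_lt_etaA (G := Fin r → ZMod 3) (by omega) (by rwa [hexp])
  rw [Finset.card_val, hScard] at hlt
  have := Nat.one_le_two_pow (n := r - 1)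
  omega
end
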